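/- arXiv:1904.08234 — 5 statements merged into one kernel-verified Lean document; each statement's English description precedes it below -/
import Mathlib

section
/- Let p be a prime and let ε > 0 be fixed. For every real X with 1 ≤ X ≤ p/12 and every A ⊆ 𝔽_p^* belonging to 𝒮(X), one has |A| ≪_ε X^ε (1 + X²/p), where the implied constant depends only on ε. -/
/-- `|x|_p = min_k |a + k p|` for a residue class `x` mod `p`. -/
def valMin (p : ℕ) (x : ZMod p) : ℕ := min x.val (p - x.val)

/-- `A ∈ 𝒮(X)`: `A ⊆ 𝔽_p^*` and every pair of elements has a small ratio one way or the other. -/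
def SMem (p : ℕ) (X : ℝ) (A : Finset (ZMod p)) : Prop :=
  (0 : ZMod p) ∉ A ∧ ∀ s₁ ∈ A, ∀ s₂ ∈ A,
    (valMin p (s₁ * s₂⁻¹) : ℝ) ≤ X ∨ (valMin p (s₂ * s₁⁻¹) : ℝ) ≤ X

/-- The divisor bound: `d(n) ≪_ε n^ε`. -/
lemma divisor_bound (ε : ℝ) (hε : 0 < ε) :
    ∃ C : ℝ, 1 ≤ C ∧ ∀ n : ℕ, n ≠ 0 → (n.divisors.card : ℝ) ≤ C * (n : ℝ) ^ ε := by
  set δ : ℝ := min 1 (ε * Real.log 2) with hδdef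
  have hlog2 : 0 < Real.log 2 := Real.log_pos one_lt_two
  have hδ0 : 0 < δ := lt_min one_pos (by positivity)
  have hδ1 : δ ≤ 1 := min_le_left _ _
  have hδε : δ ≤ ε * Real.log 2 := min_le_right _ _
  have h1δ : 1 ≤ 1 / δ := by rw [le_div_iff₀ hδ0]; simpa using hδ1
  set M : ℕ := ⌈(2 : ℝ) ^ (1 / ε)⌉₊ with hM
  refine ⟨(1 / δ) ^ M, one_le_pow₀ h1δ, ?_⟩
  intro n hn
  rw [Nat.card_divisors hn]
  have key : ∀ q ∈ n.primeFactors,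
      ((n.factorization q + 1 : ℕ) : ℝ) ≤
        (if q < M then 1 / δ else 1) * ((q ^ n.factorization q : ℕ) : ℝ) ^ ε := by
    intro q hq
    have hqp : q.Prime := Nat.prime_of_mem_primeFactors hq
    have hq2 : (2 : ℝ) ≤ (q : ℝ) := by exact_mod_cast hqp.two_le
    have hq0 : (0 : ℝ) ≤ (q : ℝ) := by linarith
    set a := n.factorization q with ha
    have hbase : ((q ^ a : ℕ) : ℝ) ^ ε = ((q : ℝ) ^ ε) ^ a := by
      push_cast
      rw [← Real.rpow_natCast ((q : ℝ) ^ ε) a, ← Real.rpow_mul hq0, mul_comm,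
        Real.rpow_mul hq0, Real.rpow_natCast]
    by_cases hqM : q < M
    · simp only [hqM, if_true]
      have h1 : ((a : ℝ) + 1) * δ ≤ Real.exp (δ * a) := by
        have hexp := Real.add_one_le_exp (δ * a)
        have haa : (0 : ℝ) ≤ (a : ℝ) := Nat.cast_nonneg a
        nlinarith
      have h2exp : Real.exp (δ * a) ≤ ((2 : ℝ) ^ ε) ^ a := by
        have heq : ((2 : ℝ) ^ ε) ^ a = Real.exp (Real.log 2 * (ε * a)) := by
          rw [← Real.rpow_natCast ((2 : ℝ) ^ ε) a, ← Real.rpow_mul (by norm_num),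
            Real.rpow_def_of_pos (by norm_num)]
        rw [heq]
        apply Real.exp_le_exp.2
        have haa : (0 : ℝ) ≤ (a : ℝ) := Nat.cast_nonneg a
        nlinarith
      have h2q : ((2 : ℝ) ^ ε) ^ a ≤ ((q : ℝ) ^ ε) ^ a :=
        pow_le_pow_left₀ (by positivity) (Real.rpow_le_rpow (by norm_num) hq2 hε.le) a
      have hfin : ((a : ℝ) + 1) ≤ 1 / δ * (((q : ℝ) ^ ε) ^ a) := by
        rw [div_mul_eq_mul_div, le_div_iff₀ hδ0]
        calc ((a : ℝ) + 1) * δ ≤ Real.exp (δ * a) := h1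
          _ ≤ ((2 : ℝ) ^ ε) ^ a := h2exp
          _ ≤ ((q : ℝ) ^ ε) ^ a := h2q
          _ = 1 * (((q : ℝ) ^ ε) ^ a) := (one_mul _).symm
      rw [hbase]
      push_cast
      exact hfin
    · simp only [hqM, if_false, one_mul]
      have hqM' : (2 : ℝ) ^ (1 / ε) ≤ (q : ℝ) := by
        refine le_trans (Nat.le_ceil _) ?_
        exact_mod_cast Nat.not_lt.1 hqM
      have h2 : (2 : ℝ) ≤ (q : ℝ) ^ ε := by
        have h := Real.rpow_le_rpow (by positivity) hqM' hε.le
        rwa [← Real.rpow_mul (by norm_num), one_div_mul_cancel hε.ne', Real.rpow_one] at h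
      have hnat : (a + 1 : ℕ) ≤ 2 ^ a := Nat.lt_two_pow_self (n := a)
      calc ((a + 1 : ℕ) : ℝ) ≤ ((2 ^ a : ℕ) : ℝ) := by exact_mod_cast hnat
        _ = (2 : ℝ) ^ a := by push_cast; ring
        _ ≤ ((q : ℝ) ^ ε) ^ a := pow_le_pow_left₀ (by norm_num) h2 a
        _ = ((q ^ a : ℕ) : ℝ) ^ ε := hbase.symm
  calc ((n.primeFactors.prod fun q => n.factorization q + 1 : ℕ) : ℝ)
      = n.primeFactors.prod fun q => ((n.factorization q + 1 : ℕ) : ℝ) := by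
        rw [Nat.cast_prod]
    _ ≤ n.primeFactors.prod fun q =>
          (if q < M then 1 / δ else 1) * ((q ^ n.factorization q : ℕ) : ℝ) ^ ε := by
        refine Finset.prod_le_prod (fun q _ => by positivity) key
    _ = (n.primeFactors.prod fun q => if q < M then 1 / δ else 1) *
          n.primeFactors.prod fun q => ((q ^ n.factorization q : ℕ) : ℝ) ^ ε :=
        Finset.prod_mul_distrib
    _ ≤ (1 / δ) ^ M * (n : ℝ) ^ ε := by
        have hw : (n.primeFactors.prod fun q => if q < M then 1 / δ else 1) ≤ (1 / δ) ^ M := by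
          rw [Finset.prod_ite, Finset.prod_const, Finset.prod_const, one_pow, mul_one]
          apply pow_le_pow_right₀ h1δ
          calc (n.primeFactors.filter (fun q => q < M)).card
              ≤ (Finset.range M).card := by
                apply Finset.card_le_card
                intro q hq
                simp only [Finset.mem_filter] at hq
                exact Finset.mem_range.2 hq.2
            _ = M := Finset.card_range M
        have hv : (n.primeFactors.prod fun q => ((q ^ n.factorization q : ℕ) : ℝ) ^ ε)
            = (n : ℝ) ^ ε := by
          rw [Real.finset_prod_rpow _ _ (fun q _ => by positivity)]
          congr 1
          rw [← Nat.cast_prod]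
          congr 1
          exact Nat.factorization_prod_pow_eq_self hn
        rw [hv]
        have hn' : (0 : ℝ) ≤ (n : ℝ) ^ ε := by positivity
        exact mul_le_mul_of_nonneg_right hw hn'

/-- The set of (signed) integer divisors of `N`. -/
def divSet (N : ℤ) : Finset ℤ :=
  N.natAbs.divisors.image (fun d : ℕ => (d : ℤ)) ∪ N.natAbs.divisors.image (fun d : ℕ => -(d : ℤ))

lemma mem_divSet {N r : ℤ} (hN : N ≠ 0) (hr : r ∣ N) : r ∈ divSet N := by
  have h1 : r.natAbs ∈ N.natAbs.divisors :=
    Nat.mem_divisors.2 ⟨Int.natAbs_dvd_natAbs.2 hr, Int.natAbs_ne_zero.2 hN⟩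
  rcases Int.natAbs_eq r with h | h
  · exact Finset.mem_union_left _ (Finset.mem_image.2 ⟨r.natAbs, h1, h.symm⟩)
  · exact Finset.mem_union_right _ (Finset.mem_image.2 ⟨r.natAbs, h1, h.symm⟩)

lemma card_divSet_le (N : ℤ) : (divSet N).card ≤ 2 * N.natAbs.divisors.card := by
  calc (divSet N).card ≤ (N.natAbs.divisors.image (fun d : ℕ => (d : ℤ))).card +
      (N.natAbs.divisors.image (fun d : ℕ => -(d : ℤ))).card := Finset.card_union_le _ _
    _ ≤ N.natAbs.divisors.card + N.natAbs.divisors.card :=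
      Nat.add_le_add (Finset.card_image_le) (Finset.card_image_le)
    _ = 2 * N.natAbs.divisors.card := by ring

set_option maxHeartbeats 1600000 in
/-- The core integer counting lemma. -/
lemma int_core (ε C' : ℝ) (hε : 0 < ε) (hε1 : ε ≤ 1) (hC' : 1 ≤ C')
    (hdiv : ∀ n : ℕ, n ≠ 0 → (n.divisors.card : ℝ) ≤ C' * (n : ℝ) ^ (ε / 2))
    (p : ℕ) (X : ℝ) (hX : 1 ≤ X) (hXp : X ≤ (p : ℝ) / 12)
    (R : Finset ℤ) (h0 : (0 : ℤ) ∉ R)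
    (hle : ∀ r ∈ R, |(r : ℝ)| ≤ X)
    (hpair : ∀ r ∈ R, ∀ s ∈ R, ∃ m k : ℤ,
      |(m : ℝ)| ≤ X ∧ (r = m * s + k * p ∨ s = m * r + k * p)) :
    (R.card : ℝ) ≤ (12 + 24 * C') * (X ^ ε * (1 + X ^ 2 / (p : ℝ))) := by
  have hX0 : (0 : ℝ) < X := lt_of_lt_of_le one_pos hX
  have hp12 : (12 : ℝ) ≤ (p : ℝ) := by nlinarith
  have hp0 : (0 : ℝ) < (p : ℝ) := by linarith
  have hXε1 : (1 : ℝ) ≤ X ^ ε := Real.one_le_rpow hX hε.le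
  have hRHS0 : (0 : ℝ) ≤ (12 + 24 * C') * (X ^ ε * (1 + X ^ 2 / (p : ℝ))) := by positivity
  rcases R.eq_empty_or_nonempty with rfl | hne
  · simpa using hRHS0
  obtain ⟨r₀, hr₀R, hmax⟩ := R.exists_max_image (fun r => r.natAbs) hne
  have hr₀0 : r₀ ≠ 0 := fun h => h0 (h ▸ hr₀R)
  have hr₀0' : (0 : ℝ) < |(r₀ : ℝ)| := by
    simp only [abs_pos, ne_eq, Int.cast_eq_zero]; exact hr₀0
  have hr₀X : |(r₀ : ℝ)| ≤ X := hle r₀ hr₀R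
  set kmax : ℤ := ⌊2 * X ^ 2 / (p : ℝ)⌋ with hkmaxdef
  have hkmax0 : 0 ≤ kmax := Int.floor_nonneg.2 (by positivity)
  set K : Finset ℤ := Finset.Icc (-kmax) kmax with hKdef
  -- the candidate target sets
  set c : ℤ → ℝ := fun k => -((k : ℝ) * (p : ℝ)) / (r₀ : ℝ) with hcdef
  set F : ℤ → Finset ℤ := fun k =>
    ((Finset.Icc ⌈c k - 1⌉ ⌊c k + 1⌋).image (fun m => m * r₀ + k * p)) ∪
      divSet (r₀ - k * p) with hFdef
  -- every element of R lies in some F k, k ∈ K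
  have hsub : R ⊆ K.biUnion F := by
    intro r hr
    obtain ⟨m, k, hm, hcase⟩ := hpair r hr r₀ hr₀R
    have hrX : |(r : ℝ)| ≤ X := hle r hr
    have hkp : |(k : ℝ)| * (p : ℝ) ≤ 2 * X ^ 2 := by
      rcases hcase with h | h
      · have hcast : (r : ℝ) = (m : ℝ) * (r₀ : ℝ) + (k : ℝ) * (p : ℝ) := by exact_mod_cast h
        have : |(k : ℝ) * (p : ℝ)| = |(r : ℝ) - (m : ℝ) * (r₀ : ℝ)| := by
          rw [hcast]; ring_nf
        have h2 : |(r : ℝ) - (m : ℝ) * (r₀ : ℝ)| ≤ |(r : ℝ)| + |(m : ℝ)| * |(r₀ : ℝ)| := by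
          calc |(r : ℝ) - (m : ℝ) * (r₀ : ℝ)| ≤ |(r : ℝ)| + |(m : ℝ) * (r₀ : ℝ)| :=
            abs_sub _ _
            _ = |(r : ℝ)| + |(m : ℝ)| * |(r₀ : ℝ)| := by rw [abs_mul]
        have h3 : |(k : ℝ) * (p : ℝ)| = |(k : ℝ)| * (p : ℝ) := by
          rw [abs_mul, abs_of_nonneg hp0.le]
        have hmm : (0 : ℝ) ≤ |(m : ℝ)| := abs_nonneg _
        nlinarith [abs_nonneg ((r : ℝ))]
      · have hcast : (r₀ : ℝ) = (m : ℝ) * (r : ℝ) + (k : ℝ) * (p : ℝ) := by exact_mod_cast h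
        have : |(k : ℝ) * (p : ℝ)| = |(r₀ : ℝ) - (m : ℝ) * (r : ℝ)| := by
          rw [hcast]; ring_nf
        have h2 : |(r₀ : ℝ) - (m : ℝ) * (r : ℝ)| ≤ |(r₀ : ℝ)| + |(m : ℝ)| * |(r : ℝ)| := by
          calc |(r₀ : ℝ) - (m : ℝ) * (r : ℝ)| ≤ |(r₀ : ℝ)| + |(m : ℝ) * (r : ℝ)| :=
            abs_sub _ _
            _ = |(r₀ : ℝ)| + |(m : ℝ)| * |(r : ℝ)| := by rw [abs_mul]
        have h3 : |(k : ℝ) * (p : ℝ)| = |(k : ℝ)| * (p : ℝ) := by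
          rw [abs_mul, abs_of_nonneg hp0.le]
        have hmm : (0 : ℝ) ≤ |(m : ℝ)| := abs_nonneg _
        nlinarith [abs_nonneg ((r₀ : ℝ))]
    have hkK : k ∈ K := by
      rw [hKdef, Finset.mem_Icc]
      constructor
      · have : ((-k : ℤ) : ℝ) ≤ 2 * X ^ 2 / (p : ℝ) := by
          push_cast
          rw [le_div_iff₀ hp0]
          calc -(k : ℝ) * (p : ℝ) ≤ |(k : ℝ)| * (p : ℝ) := by
                apply mul_le_mul_of_nonneg_right (neg_le_abs _) hp0.le
            _ ≤ 2 * X ^ 2 := hkp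
        have := Int.le_floor.2 this
        omega
      · apply Int.le_floor.2
        calc ((k : ℤ) : ℝ) ≤ |(k : ℝ)| := le_abs_self _
          _ ≤ 2 * X ^ 2 / (p : ℝ) := (le_div_iff₀ hp0).2 hkp
    refine Finset.mem_biUnion.2 ⟨k, hkK, ?_⟩
    rcases hcase with h | h
    · -- r = m * r₀ + k * p : at most 3 values of m
      apply Finset.mem_union_left
      apply Finset.mem_image.2
      refine ⟨m, ?_, by linarith [h]⟩
      have hr₀ne : (r₀ : ℝ) ≠ 0 := by exact_mod_cast hr₀0
      have hcast : (r : ℝ) = (m : ℝ) * (r₀ : ℝ) + (k : ℝ) * (p : ℝ) := by exact_mod_cast h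
      have hmc : |(m : ℝ) - c k| ≤ 1 := by
        have hmc' : (m : ℝ) - c k = (r : ℝ) / (r₀ : ℝ) := by
          rw [hcdef]
          field_simp
          linarith [hcast]
        rw [hmc', abs_div]
        rw [div_le_one hr₀0']
        have hrr₀ : r.natAbs ≤ r₀.natAbs := hmax r hr
        have habs' : |r| ≤ |r₀| := by
          rw [Int.abs_eq_natAbs, Int.abs_eq_natAbs]
          exact_mod_cast hrr₀
        rw [← Int.cast_abs, ← Int.cast_abs]
        exact_mod_cast habs'
      rw [Finset.mem_Icc]
      constructor
      · apply Int.ceil_le.2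
        push_cast
        have := abs_le.1 hmc
        linarith [this.1]
      · apply Int.le_floor.2
        push_cast
        have := abs_le.1 hmc
        linarith [this.2]
    · -- r₀ = m * r + k * p : r divides r₀ - k p
      apply Finset.mem_union_right
      have hN : r₀ - k * p = m * r := by linarith [h]
      have hr0 : r ≠ 0 := fun hh => h0 (hh ▸ hr)
      have hNne : r₀ - k * p ≠ 0 := by
        intro hzero
        -- then r₀ = k * p; |r₀| ≤ X < p forces k = 0, r₀ = 0
        have hkp0 : r₀ = k * p := by linarith [hzero]
        rcases eq_or_ne k 0 with rfl | hk0
        · simp at hkp0; exact hr₀0 hkp0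
        · have h1k : (1 : ℝ) ≤ |(k : ℝ)| := by
            have : (1 : ℤ) ≤ |k| := Int.one_le_abs hk0
            calc (1 : ℝ) = ((1 : ℤ) : ℝ) := by norm_num
              _ ≤ ((|k| : ℤ) : ℝ) := by exact_mod_cast this
              _ = |(k : ℝ)| := by push_cast; simp
          have hcast : (r₀ : ℝ) = (k : ℝ) * (p : ℝ) := by exact_mod_cast hkp0
          have : (p : ℝ) ≤ |(r₀ : ℝ)| := by
            rw [hcast, abs_mul, abs_of_nonneg hp0.le]
            nlinarith
          have hXltp : X < (p : ℝ) := by linarith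
          linarith
      exact mem_divSet hNne ⟨m, by linarith [hN]⟩
  -- cardinality of each F k
  have hFcard : ∀ k ∈ K, ((F k).card : ℝ) ≤ (3 + 6 * C') * X ^ ε := by
    intro k hk
    have hIcc3 : (Finset.Icc ⌈c k - 1⌉ ⌊c k + 1⌋).card ≤ 3 := by
      rw [Int.card_Icc]
      apply (Int.toNat_le).2
      have h1 : (⌊c k + 1⌋ : ℝ) ≤ c k + 1 := Int.floor_le _
      have h2 : c k - 1 ≤ (⌈c k - 1⌉ : ℝ) := Int.le_ceil _
      have : (⌊c k + 1⌋ : ℝ) ≤ (⌈c k - 1⌉ : ℝ) + 2 := by linarith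
      have hint : ⌊c k + 1⌋ ≤ ⌈c k - 1⌉ + 2 := by exact_mod_cast this
      omega
    have hdivcard : ((divSet (r₀ - k * p)).card : ℝ) ≤ 6 * C' * X ^ ε := by
      rcases eq_or_ne (r₀ - k * p) 0 with hzero | hNne
      · rw [hzero]
        have : (divSet 0).card = 0 := by
          simp [divSet, Nat.divisors_zero]
        rw [this]
        have hXε0 : (0 : ℝ) ≤ X ^ ε := Real.rpow_nonneg hX0.le ε
        push_cast
        nlinarith
      · set N := r₀ - k * p with hNdef
        have hNnat : N.natAbs ≠ 0 := Int.natAbs_ne_zero.2 hNne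
        -- |N| ≤ 3 X²
        have hkK := hk
        rw [hKdef, Finset.mem_Icc] at hkK
        have hkabs : |(k : ℝ)| ≤ 2 * X ^ 2 / (p : ℝ) := by
          rw [abs_le]
          constructor
          · have := hkK.1
            have h' : ((-kmax : ℤ) : ℝ) ≤ (k : ℝ) := by exact_mod_cast this
            push_cast at h'
            have hfl : (kmax : ℝ) ≤ 2 * X ^ 2 / (p : ℝ) := Int.floor_le _
            linarith
          · have := hkK.2
            have h' : ((k : ℤ) : ℝ) ≤ (kmax : ℝ) := by exact_mod_cast this
            have hfl : (kmax : ℝ) ≤ 2 * X ^ 2 / (p : ℝ) := Int.floor_le _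
            linarith
        have hNabs : |(N : ℝ)| ≤ 3 * X ^ 2 := by
          have : (N : ℝ) = (r₀ : ℝ) - (k : ℝ) * (p : ℝ) := by
            rw [hNdef]; push_cast; ring
          rw [this]
          have h1 : |(r₀ : ℝ) - (k : ℝ) * (p : ℝ)| ≤ |(r₀ : ℝ)| + |(k : ℝ)| * (p : ℝ) := by
            calc |(r₀ : ℝ) - (k : ℝ) * (p : ℝ)| ≤ |(r₀ : ℝ)| + |(k : ℝ) * (p : ℝ)| := abs_sub _ _
              _ = |(r₀ : ℝ)| + |(k : ℝ)| * (p : ℝ) := by rw [abs_mul, abs_of_nonneg hp0.le]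
          have h2 : |(k : ℝ)| * (p : ℝ) ≤ 2 * X ^ 2 := by
            have := (le_div_iff₀ hp0).1 hkabs
            linarith
          have h3 : X ≤ X ^ 2 := by nlinarith
          linarith
        have hNcast : ((N.natAbs : ℕ) : ℝ) = |(N : ℝ)| := by
          rw [Nat.cast_natAbs, Int.cast_abs]
        have hC'0 : (0 : ℝ) ≤ C' := by linarith
        have hXε0 : (0 : ℝ) ≤ X ^ ε := Real.rpow_nonneg hX0.le ε
        have hmono : ((N.natAbs : ℕ) : ℝ) ^ (ε / 2) ≤ (3 * X ^ 2) ^ (ε / 2) := by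
          apply Real.rpow_le_rpow (by positivity) _ (by positivity)
          rw [hNcast]; exact hNabs
        have hend : ((3 * X ^ 2 : ℝ)) ^ (ε / 2) ≤ 3 * X ^ ε := by
          have hsplit : (3 * X ^ 2 : ℝ) ^ (ε / 2) = (3 : ℝ) ^ (ε / 2) * (X ^ 2) ^ (ε / 2) :=
            Real.mul_rpow (by norm_num) (by positivity)
          have hXpow : ((X ^ 2 : ℝ)) ^ (ε / 2) = X ^ ε := by
            rw [← Real.rpow_natCast X 2, ← Real.rpow_mul hX0.le]
            norm_num
            rw [show (2:ℝ) * (ε / 2) = ε by ring]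
          have h3pow : (3 : ℝ) ^ (ε / 2) ≤ 3 := by
            calc (3 : ℝ) ^ (ε / 2) ≤ (3 : ℝ) ^ (1 : ℝ) :=
              Real.rpow_le_rpow_of_exponent_le (by norm_num) (by linarith)
              _ = 3 := Real.rpow_one 3
          rw [hsplit, hXpow]
          exact mul_le_mul_of_nonneg_right h3pow hXε0
        have hmul : C' * (((N.natAbs : ℕ) : ℝ) ^ (ε / 2)) ≤ C' * (3 * X ^ ε) :=
          mul_le_mul_of_nonneg_left (hmono.trans hend) hC'0
        have hd := hdiv N.natAbs hNnat
        calc ((divSet N).card : ℝ) ≤ 2 * (N.natAbs.divisors.card : ℝ) := by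
              exact_mod_cast card_divSet_le N
          _ ≤ 2 * (C' * (3 * X ^ ε)) := by linarith
          _ = 6 * C' * X ^ ε := by ring
    calc ((F k).card : ℝ)
        ≤ (((Finset.Icc ⌈c k - 1⌉ ⌊c k + 1⌋).image (fun m => m * r₀ + k * p)).card : ℝ) +
          ((divSet (r₀ - k * p)).card : ℝ) := by
          exact_mod_cast Finset.card_union_le _ _
      _ ≤ 3 + 6 * C' * X ^ ε := by
          have h1 : ((Finset.Icc ⌈c k - 1⌉ ⌊c k + 1⌋).image
              (fun m => m * r₀ + k * p)).card ≤ 3 :=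
            le_trans Finset.card_image_le hIcc3
          have h1' : (((Finset.Icc ⌈c k - 1⌉ ⌊c k + 1⌋).image
              (fun m => m * r₀ + k * p)).card : ℝ) ≤ 3 := by exact_mod_cast h1
          linarith
      _ ≤ (3 + 6 * C') * X ^ ε := by
          have hXε1' : (1 : ℝ) ≤ X ^ ε := hXε1
          have hC'0 : (0 : ℝ) ≤ C' := by linarith
          nlinarith
  -- cardinality of K
  have hKcard : ((K.card : ℕ) : ℝ) ≤ 4 * (1 + X ^ 2 / (p : ℝ)) := by
    have h1 : (K.card : ℤ) = 2 * kmax + 1 := by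
      rw [hKdef, Int.card_Icc]
      have : kmax + 1 - -kmax = 2 * kmax + 1 := by ring
      rw [this, Int.toNat_of_nonneg (by omega)]
    have h2 : ((K.card : ℕ) : ℝ) = 2 * (kmax : ℝ) + 1 := by exact_mod_cast h1
    have h3 : (kmax : ℝ) ≤ 2 * X ^ 2 / (p : ℝ) := Int.floor_le _
    rw [h2]
    have h4 : 2 * X ^ 2 / (p : ℝ) = 2 * (X ^ 2 / (p : ℝ)) := by ring
    have h5 : X ^ 2 / (p : ℝ) ≥ 0 := by positivity
    rw [h4] at h3
    linarith
  -- combine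
  calc (R.card : ℝ) ≤ ((K.biUnion F).card : ℝ) := by
        exact_mod_cast Finset.card_le_card hsub
    _ ≤ ((K.sum fun k => (F k).card : ℕ) : ℝ) := by exact_mod_cast Finset.card_biUnion_le
    _ = K.sum fun k => ((F k).card : ℝ) := by rw [Nat.cast_sum]
    _ ≤ K.sum fun _ => (3 + 6 * C') * X ^ ε := Finset.sum_le_sum hFcard
    _ = (K.card : ℝ) * ((3 + 6 * C') * X ^ ε) := by
        rw [Finset.sum_const, nsmul_eq_mul]
    _ ≤ (4 * (1 + X ^ 2 / (p : ℝ))) * ((3 + 6 * C') * X ^ ε) := by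
        apply mul_le_mul_of_nonneg_right hKcard
        have hC'0 : (0 : ℝ) ≤ C' := by linarith
        positivity
    _ = (12 + 24 * C') * (X ^ ε * (1 + X ^ 2 / (p : ℝ))) := by ring

lemma valMin_eq_natAbs (p : ℕ) [NeZero p] (x : ZMod p) :
    valMin p x = x.valMinAbs.natAbs := by
  have hvlt : x.val < p := x.val_lt
  rw [valMin, ZMod.valMinAbs_def_pos]
  split_ifs with h
  · have h2 : x.val * 2 ≤ p := (Nat.le_div_iff_mul_le (by norm_num)).1 h
    simp only [Int.natAbs_natCast]
    omega
  · have h2 : p < x.val * 2 := (Nat.div_lt_iff_lt_mul (by norm_num)).1 (Nat.not_le.1 h)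
    have : ((x.val : ℤ) - (p : ℤ)).natAbs = p - x.val := by omega
    rw [this]
    omega

/-- Glue lemma: a subset of `ZMod p` mapped injectively to small residues with
pairwise multiplicative relations. -/
lemma zmod_block (ε C' : ℝ) (hε : 0 < ε) (hε1 : ε ≤ 1) (hC' : 1 ≤ C')
    (hdiv : ∀ n : ℕ, n ≠ 0 → (n.divisors.card : ℝ) ≤ C' * (n : ℝ) ^ (ε / 2))
    (p : ℕ) [Fact p.Prime] (X : ℝ) (hX : 1 ≤ X) (hXp : X ≤ (p : ℝ) / 12)
    (S : Finset (ZMod p)) (f : ZMod p → ZMod p)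
    (hinj : Set.InjOn f S)
    (h0 : ∀ t ∈ S, f t ≠ 0)
    (hsmall : ∀ t ∈ S, (valMin p (f t) : ℝ) ≤ X)
    (hrel : ∀ t ∈ S, ∀ u ∈ S, ∃ x : ZMod p,
      (valMin p x : ℝ) ≤ X ∧ (f t = x * f u ∨ f u = x * f t)) :
    (S.card : ℝ) ≤ (12 + 24 * C') * (X ^ ε * (1 + X ^ 2 / (p : ℝ))) := by
  haveI : NeZero p := ⟨(Fact.out : p.Prime).ne_zero⟩
  set R : Finset ℤ := S.image (fun t => (f t).valMinAbs) with hRdef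
  have habs : ∀ y : ZMod p, |((y.valMinAbs : ℤ) : ℝ)| = (valMin p y : ℝ) := by
    intro y
    rw [valMin_eq_natAbs p y, Nat.cast_natAbs, Int.cast_abs]
  have hcard : R.card = S.card := by
    apply Finset.card_image_of_injOn
    intro t ht u hu h
    exact hinj ht hu (ZMod.injective_valMinAbs h)
  rw [← hcard]
  apply int_core ε C' hε hε1 hC' hdiv p X hX hXp
  · -- 0 ∉ R
    intro hmem
    rw [hRdef, Finset.mem_image] at hmem
    obtain ⟨t, ht, hval⟩ := hmem
    exact h0 t ht ((ZMod.valMinAbs_eq_zero _).1 hval)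
  · -- bound on elements
    intro r hr
    rw [hRdef, Finset.mem_image] at hr
    obtain ⟨t, ht, rfl⟩ := hr
    rw [habs]
    exact hsmall t ht
  · -- pairwise relation
    intro r hr s hs
    rw [hRdef, Finset.mem_image] at hr hs
    obtain ⟨t, ht, rfl⟩ := hr
    obtain ⟨u, hu, rfl⟩ := hs
    obtain ⟨x, hxsmall, hcase⟩ := hrel t ht u hu
    have habs' : |((x.valMinAbs : ℤ) : ℝ)| ≤ X := by rw [habs]; exact hxsmall
    rcases hcase with h | h
    · -- f t = x * f u : r ≡ m s (mod p)
      have hdvd : (p : ℤ) ∣ (f t).valMinAbs - x.valMinAbs * (f u).valMinAbs := by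
        rw [← ZMod.intCast_zmod_eq_zero_iff_dvd]
        push_cast
        rw [h, sub_self]
      obtain ⟨k, hk⟩ := hdvd
      exact ⟨x.valMinAbs, k, habs', Or.inl (by linarith [hk])⟩
    · have hdvd : (p : ℤ) ∣ (f u).valMinAbs - x.valMinAbs * (f t).valMinAbs := by
        rw [← ZMod.intCast_zmod_eq_zero_iff_dvd]
        push_cast
        rw [h, sub_self]
      obtain ⟨k, hk⟩ := hdvd
      exact ⟨x.valMinAbs, k, habs', Or.inr (by linarith [hk])⟩

set_option maxHeartbeats 1600000 in
/-- For fixed `ε > 0`: for every prime `p`, every `1 ≤ X ≤ p/12` and every `A ∈ 𝒮(X)`,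
`|A| ≪_ε X^ε (1 + X²/p)`. -/
theorem stmt1 (ε : ℝ) (hε : 0 < ε) :
    ∃ C : ℝ, 0 < C ∧ ∀ p : ℕ, p.Prime → ∀ X : ℝ, 1 ≤ X → X ≤ (p : ℝ) / 12 →
      ∀ A : Finset (ZMod p), SMem p X A →
        (A.card : ℝ) ≤ C * (X ^ ε * (1 + X ^ 2 / p)) := by
  set ε' := min ε 1 with hε'def
  have hε'0 : 0 < ε' := lt_min hε one_pos
  have hε'1 : ε' ≤ 1 := min_le_right _ _
  have hε'ε : ε' ≤ ε := min_le_left _ _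
  obtain ⟨C', hC'1, hdiv⟩ := divisor_bound (ε' / 2) (by positivity)
  refine ⟨2 * (12 + 24 * C'), by linarith, ?_⟩
  intro p hp X hX1 hXp A hA
  haveI : Fact p.Prime := ⟨hp⟩
  haveI : NeZero p := ⟨hp.ne_zero⟩
  obtain ⟨h0A, hpairA⟩ := hA
  have hX0 : (0 : ℝ) < X := lt_of_lt_of_le one_pos hX1
  have hp0 : (0 : ℝ) < (p : ℝ) := by
    have : (12 : ℝ) ≤ (p : ℝ) := by nlinarith
    linarith
  rcases A.eq_empty_or_nonempty with rfl | ⟨a, ha⟩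
  · simp only [Finset.card_empty, Nat.cast_zero]
    positivity
  have ha0 : a ≠ 0 := fun h => h0A (h ▸ ha)
  have hainv0 : a⁻¹ ≠ 0 := inv_ne_zero ha0
  set A1 := A.filter (fun t => (valMin p (t * a⁻¹) : ℝ) ≤ X) with hA1def
  set A2 := A.filter (fun t => ¬ (valMin p (t * a⁻¹) : ℝ) ≤ X) with hA2def
  have hsplit : A1.card + A2.card = A.card :=
    Finset.card_filter_add_card_filter_not _
  have hmemne : ∀ t ∈ A, t ≠ 0 := fun t ht h => h0A (h ▸ ht)
  -- bound for A1
  have h1 : (A1.card : ℝ) ≤ (12 + 24 * C') * (X ^ ε' * (1 + X ^ 2 / (p : ℝ))) := by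
    apply zmod_block ε' C' hε'0 hε'1 hC'1 hdiv p X hX1 hXp A1 (fun t => t * a⁻¹)
    · intro t ht u hu h
      simp only at h
      exact mul_right_cancel₀ hainv0 h
    · intro t ht
      have ht' : t ∈ A := Finset.mem_filter.1 ht |>.1
      exact mul_ne_zero (hmemne t ht') hainv0
    · intro t ht
      exact (Finset.mem_filter.1 ht).2
    · intro t ht u hu
      have ht' : t ∈ A := (Finset.mem_filter.1 ht).1
      have hu' : u ∈ A := (Finset.mem_filter.1 hu).1
      have hu0 : u ≠ 0 := hmemne u hu'
      have ht0 : t ≠ 0 := hmemne t ht'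
      rcases hpairA t ht' u hu' with h | h
      · refine ⟨t * u⁻¹, h, Or.inl ?_⟩
        field_simp
      · refine ⟨u * t⁻¹, h, Or.inr ?_⟩
        field_simp
  -- bound for A2
  have h2 : (A2.card : ℝ) ≤ (12 + 24 * C') * (X ^ ε' * (1 + X ^ 2 / (p : ℝ))) := by
    apply zmod_block ε' C' hε'0 hε'1 hC'1 hdiv p X hX1 hXp A2 (fun t => a * t⁻¹)
    · intro t ht u hu h
      simp only at h
      have ht' : t ∈ A := (Finset.mem_filter.1 ht).1
      have hu' : u ∈ A := (Finset.mem_filter.1 hu).1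
      have := mul_left_cancel₀ ha0 h
      exact inv_injective this
    · intro t ht
      have ht' : t ∈ A := (Finset.mem_filter.1 ht).1
      exact mul_ne_zero ha0 (inv_ne_zero (hmemne t ht'))
    · intro t ht
      have ht' : t ∈ A := (Finset.mem_filter.1 ht).1
      have hnot := (Finset.mem_filter.1 ht).2
      rcases hpairA t ht' a ha with h | h
      · exact absurd h hnot
      · exact h
    · intro t ht u hu
      have ht' : t ∈ A := (Finset.mem_filter.1 ht).1
      have hu' : u ∈ A := (Finset.mem_filter.1 hu).1
      have hu0 : u ≠ 0 := hmemne u hu'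
      have ht0 : t ≠ 0 := hmemne t ht'
      rcases hpairA t ht' u hu' with h | h
      · refine ⟨t * u⁻¹, h, Or.inr ?_⟩
        field_simp
      · refine ⟨u * t⁻¹, h, Or.inl ?_⟩
        field_simp
  -- combine
  have hmono : X ^ ε' ≤ X ^ ε := Real.rpow_le_rpow_of_exponent_le hX1 hε'ε
  have hpos : (0 : ℝ) ≤ 1 + X ^ 2 / (p : ℝ) := by positivity
  have hC'0 : (0 : ℝ) ≤ C' := by linarith
  have hcards : (A.card : ℝ) = (A1.card : ℝ) + (A2.card : ℝ) := by exact_mod_cast hsplit.symm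
  rw [hcards]
  have hfin : (12 + 24 * C') * (X ^ ε' * (1 + X ^ 2 / (p : ℝ)))
      ≤ (12 + 24 * C') * (X ^ ε * (1 + X ^ 2 / (p : ℝ))) := by
    apply mul_le_mul_of_nonneg_left _ (by linarith)
    exact mul_le_mul_of_nonneg_right hmono hpos
  linarith
end

section
/- Let p be a prime. For every real X with 1 ≤ X ≤ p/12 and every A ⊆ 𝔽_p^* belonging to 𝒮(X), one has |A| ≪ p^{1/2}, with an absolute implied constant. -/
namespace CompAux

open Finset


section
variable {p : ℕ} [NeZero p]

noncomputable def psi (p : ℕ) [NeZero p] : AddChar (ZMod p) ℂ := ZMod.stdAddChar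

noncomputable def Complex.abs : AbsoluteValue ℂ ℝ := NormedField.toAbsoluteValue ℂ

lemma Complex.abs_apply (z : ℂ) : Complex.abs z = ‖z‖ := rfl

lemma Complex.sq_abs (z : ℂ) : Complex.abs z ^ 2 = Complex.normSq z := by
  rw [Complex.abs_apply, Complex.sq_norm]

lemma Complex.abs_natCast (k : ℕ) : Complex.abs (k : ℂ) = k := by
  rw [Complex.abs_apply, Complex.norm_natCast]

lemma Circle.abs_coe (z : Circle) : Complex.abs (z : ℂ) = 1 := Circle.norm_coe z

lemma abs_psi (x : ZMod p) : Complex.abs (psi p x) = 1 := by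
  rw [psi, ZMod.stdAddChar_apply]; exact Circle.abs_coe _

lemma psi_ne_zero (x : ZMod p) : psi p x ≠ 0 := by
  intro h
  have := abs_psi x
  rw [h] at this
  simp at this

lemma conj_psi (x : ZMod p) : (starRingEnd ℂ) (psi p x) = psi p (-x) := by
  have h1 : psi p x * psi p (-x) = 1 := by
    rw [← AddChar.map_add_eq_mul]
    simp
  have h2 : psi p x * (starRingEnd ℂ) (psi p x) = 1 := by
    rw [Complex.mul_conj]
    norm_cast
    rw [← Complex.sq_abs, abs_psi]
    norm_num
  exact mul_left_cancel₀ (psi_ne_zero x) (h2.trans h1.symm)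

lemma sum_psi_mul (b : ZMod p) :
    ∑ x : ZMod p, psi p (x * b) = if b = 0 then (p : ℂ) else 0 := by
  have := AddChar.sum_mulShift (ψ := psi p) b (ZMod.isPrimitive_stdAddChar p)
  rw [ZMod.card] at this
  split_ifs with h <;> simp_all

end

section
variable {p : ℕ} [NeZero p]

/-- the interval `[-L, L]` viewed inside `ZMod p` -/
noncomputable def Jset (p : ℕ) (L : ℕ) : Finset (ZMod p) :=
  (Finset.Icc (-(L : ℤ)) (L : ℤ)).image (Int.cast : ℤ → ZMod p)

lemma card_Jset {L : ℕ} (hL : 2 * L < p) : (Jset p L).card = 2 * L + 1 := by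
  rw [Jset, Finset.card_image_of_injOn, Int.card_Icc]
  · omega
  · intro a ha b hb hab
    rw [Finset.mem_coe, Finset.mem_Icc] at ha hb
    rw [ZMod.intCast_eq_intCast_iff] at hab
    have hd : (p : ℤ) ∣ b - a := Int.ModEq.dvd hab
    rcases hd with ⟨k, hk⟩
    have h1 : |b - a| < (p : ℤ) := by
      rw [abs_lt]
      omega
    rw [hk] at h1
    have : |(p : ℤ) * k| = (p : ℤ) * |k| := by
      rw [abs_mul, abs_of_nonneg (by positivity : (0:ℤ) ≤ (p:ℤ))]
    rw [this] at h1
    have hk0 : k = 0 := by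
      by_contra hk0
      have h2 : 1 ≤ |k| := Int.one_le_abs (by simpa using hk0)
      nlinarith [Int.natCast_pos.mpr (Nat.pos_of_ne_zero (NeZero.ne p))]
    rw [hk0, mul_zero] at hk
    omega

lemma mem_Jset_of_valMin {L : ℕ} (z : ZMod p) (hz : min z.val (p - z.val) ≤ L) :
    z ∈ Jset p L := by
  rw [Jset, Finset.mem_image]
  rcases min_le_iff.mp hz with h | h
  · refine ⟨(z.val : ℤ), ?_, ?_⟩
    · rw [Finset.mem_Icc]
      constructor <;> omega
    · push_cast
      exact ZMod.natCast_zmod_val z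
  · refine ⟨(z.val : ℤ) - p, ?_, ?_⟩
    · have hlt := ZMod.val_lt z
      rw [Finset.mem_Icc]
      constructor <;> omega
    · push_cast
      simp [ZMod.natCast_zmod_val]

lemma neg_sub_mem_Jset {m : ℕ} {z y : ZMod p} (hz : z ∈ Jset p m) (hy : y ∈ Jset p m) :
    -z - y ∈ Jset p (2 * m) := by
  rw [Jset, Finset.mem_image] at hz hy ⊢
  obtain ⟨t0, ht0, rfl⟩ := hz
  obtain ⟨t, ht, rfl⟩ := hy
  rw [Finset.mem_Icc] at ht0 ht
  refine ⟨-t0 - t, ?_, by push_cast; ring⟩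
  rw [Finset.mem_Icc]
  constructor <;> omega

end

section
variable {p : ℕ} [NeZero p]
lemma parseval (W : Finset (ZMod p)) :
    ∑ t : ZMod p, (Complex.abs (∑ w ∈ W, psi p (t * w)))^2 = (p : ℝ) * W.card := by
  have key : ∑ t : ZMod p, ((∑ w ∈ W, psi p (t * w)) *
      (starRingEnd ℂ) (∑ w ∈ W, psi p (t * w))) = ((p : ℂ) * W.card) := by
    have step1 : ∀ t : ZMod p, (∑ w ∈ W, psi p (t * w)) *
        (starRingEnd ℂ) (∑ w ∈ W, psi p (t * w))
        = ∑ w ∈ W, ∑ w' ∈ W, psi p (t * (w - w')) := by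
      intro t
      rw [map_sum]
      rw [Finset.sum_mul_sum]
      refine Finset.sum_congr rfl (fun w _ => Finset.sum_congr rfl (fun w' _ => ?_))
      rw [conj_psi, ← AddChar.map_add_eq_mul]
      ring_nf
    calc ∑ t : ZMod p, ((∑ w ∈ W, psi p (t * w)) * (starRingEnd ℂ) (∑ w ∈ W, psi p (t * w)))
        = ∑ t : ZMod p, ∑ w ∈ W, ∑ w' ∈ W, psi p (t * (w - w')) := by
          exact Finset.sum_congr rfl (fun t _ => step1 t)
      _ = ∑ w ∈ W, ∑ w' ∈ W, ∑ t : ZMod p, psi p (t * (w - w')) := by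
          rw [Finset.sum_comm]
          refine Finset.sum_congr rfl (fun w _ => ?_)
          rw [Finset.sum_comm]
      _ = ∑ w ∈ W, ∑ w' ∈ W, (if w - w' = 0 then (p : ℂ) else 0) := by
          refine Finset.sum_congr rfl (fun w _ => Finset.sum_congr rfl (fun w' _ => ?_))
          exact sum_psi_mul _
      _ = ∑ w ∈ W, ∑ w' ∈ W, (if w' = w then (p : ℂ) else 0) := by
          refine Finset.sum_congr rfl (fun w _ => Finset.sum_congr rfl (fun w' _ => ?_))
          congr 1
          simp [sub_eq_zero, eq_comm]
      _ = ∑ w ∈ W, (p : ℂ) := by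
          refine Finset.sum_congr rfl (fun w hw => ?_)
          rw [Finset.sum_ite_eq' W w (fun _ => (p : ℂ))]
          simp [hw]
      _ = (p : ℂ) * W.card := by
          rw [Finset.sum_const]
          push_cast
          ring
  have cast_eq : ∀ t : ZMod p, ((Complex.abs (∑ w ∈ W, psi p (t * w)))^2 : ℂ)
      = (∑ w ∈ W, psi p (t * w)) * (starRingEnd ℂ) (∑ w ∈ W, psi p (t * w)) := by
    intro t
    rw [Complex.mul_conj]
    norm_cast
    rw [Complex.sq_abs]
  have : ((∑ t : ZMod p, (Complex.abs (∑ w ∈ W, psi p (t * w)))^2 : ℝ) : ℂ)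
      = ((p : ℝ) * W.card : ℝ) := by
    push_cast
    rw [← key]
    rw [Finset.sum_congr rfl (fun t _ => cast_eq t)]
  exact_mod_cast this


end


set_option maxHeartbeats 2000000 in
lemma main_bound (p : ℕ) (hp : p.Prime) (m : ℕ) (hm : 1 ≤ m) (h12 : 12 * m ≤ p)
    (A : Finset (ZMod p)) (h0 : (0 : ZMod p) ∉ A)
    (hA : ∀ s₁ ∈ A, ∀ s₂ ∈ A, valMin p (s₁ * s₂⁻¹) ≤ m ∨ valMin p (s₂ * s₁⁻¹) ≤ m) :
    (A.card : ℝ) ≤ 17 * Real.sqrt p := by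
  haveI : Fact p.Prime := ⟨hp⟩
  haveI : NeZero p := ⟨hp.ne_zero⟩
  rcases Nat.eq_zero_or_pos A.card with hn | hnpos
  · rw [hn]
    have : (0:ℝ) ≤ 17 * Real.sqrt p := by positivity
    simpa using this
  set n := A.card with hn_def
  set J1 : Finset (ZMod p) := Jset p m with hJ1
  set J2 : Finset (ZMod p) := Jset p (2 * m) with hJ2
  have hpm : 2 * m < p := by omega
  have hpm2 : 2 * (2 * m) < p := by omega
  have cardJ1 : J1.card = 2 * m + 1 := card_Jset hpm
  have cardJ2 : J2.card = 4 * m + 1 := by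
    rw [hJ2, card_Jset hpm2]; ring
  set F := (A ×ˢ A).filter (fun x => x.1 * x.2⁻¹ ∈ J1) with hF
  -- Step 1 : n^2 ≤ 2 |F|
  have step1 : n ^ 2 ≤ 2 * F.card := by
    have hsplit := Finset.card_filter_add_card_filter_not
      (s := A ×ˢ A) (p := fun x => x.1 * x.2⁻¹ ∈ J1)
    have hinj : ((A ×ˢ A).filter (fun x => ¬ (x.1 * x.2⁻¹ ∈ J1))).card ≤ F.card := by
      apply Finset.card_le_card_of_injOn (fun x => (x.2, x.1))
      · intro x hx
        rw [Finset.mem_coe, Finset.mem_filter, Finset.mem_product] at hx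
        obtain ⟨⟨hx1, hx2⟩, hx3⟩ := hx
        rw [hF, Finset.mem_coe, Finset.mem_filter, Finset.mem_product]
        refine ⟨⟨hx2, hx1⟩, ?_⟩
        rcases hA x.1 hx1 x.2 hx2 with h | h
        · exact absurd (mem_Jset_of_valMin _ h) hx3
        · exact mem_Jset_of_valMin _ h
      · intro x _ y _ hxy
        have h1 : x.2 = y.2 := congrArg Prod.fst hxy
        have h2 : x.1 = y.1 := congrArg Prod.snd hxy
        exact Prod.ext h2 h1
    have hcard : (A ×ˢ A).card = n ^ 2 := by
      rw [Finset.card_product]; ring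
    rw [← hF] at hsplit
    omega
  -- T : the quadruple count
  set T := ∑ x ∈ A ×ˢ A,
      ((J2 ×ˢ J1).filter (fun uy => x.1 * x.2⁻¹ + uy.1 + uy.2 = 0)).card with hT
  have step2 : (2 * m + 1) * F.card ≤ T := by
    have h1 : ∀ x ∈ F, 2 * m + 1 ≤
        ((J2 ×ˢ J1).filter (fun uy => x.1 * x.2⁻¹ + uy.1 + uy.2 = 0)).card := by
      intro x hx
      rw [hF, Finset.mem_filter] at hx
      obtain ⟨_, hxJ⟩ := hx
      rw [← cardJ1]
      apply Finset.card_le_card_of_injOn (fun y => (-(x.1 * x.2⁻¹) - y, y))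
      · intro y hy
        rw [Finset.mem_coe, Finset.mem_filter, Finset.mem_product]
        exact ⟨⟨neg_sub_mem_Jset hxJ hy, hy⟩, by ring⟩
      · intro y _ y' _ h
        exact congrArg Prod.snd h
    calc (2 * m + 1) * F.card = ∑ _x ∈ F, (2 * m + 1) := by
          rw [Finset.sum_const, smul_eq_mul, mul_comm]
      _ ≤ ∑ x ∈ F, ((J2 ×ˢ J1).filter (fun uy => x.1 * x.2⁻¹ + uy.1 + uy.2 = 0)).card :=
          Finset.sum_le_sum h1
      _ ≤ T := by
          rw [hT]
          exact Finset.sum_le_sum_of_subset (Finset.filter_subset _ _)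
  -- characters
  set K : ZMod p → ℂ := fun h => ∑ x ∈ A ×ˢ A, psi p (h * (x.1 * x.2⁻¹)) with hK
  set G1 : ZMod p → ℂ := fun h => ∑ y ∈ J1, psi p (h * y) with hG1
  set G2 : ZMod p → ℂ := fun h => ∑ u ∈ J2, psi p (h * u) with hG2
  have identity : ∑ h : ZMod p, K h * G2 h * G1 h = (p : ℂ) * T := by
    have expand : ∀ h : ZMod p, K h * G2 h * G1 h
        = ∑ x ∈ A ×ˢ A, ∑ u ∈ J2, ∑ y ∈ J1, psi p (h * (x.1 * x.2⁻¹ + u + y)) := by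
      intro h
      rw [hK, hG2, hG1]
      rw [Finset.sum_mul_sum]
      rw [Finset.sum_mul]
      refine Finset.sum_congr rfl (fun x _ => ?_)
      rw [Finset.sum_mul]
      refine Finset.sum_congr rfl (fun u _ => ?_)
      rw [Finset.mul_sum]
      refine Finset.sum_congr rfl (fun y _ => ?_)
      rw [← AddChar.map_add_eq_mul, ← AddChar.map_add_eq_mul]
      congr 1
      ring
    calc ∑ h : ZMod p, K h * G2 h * G1 h
        = ∑ h : ZMod p, ∑ x ∈ A ×ˢ A, ∑ u ∈ J2, ∑ y ∈ J1,
            psi p (h * (x.1 * x.2⁻¹ + u + y)) :=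
          Finset.sum_congr rfl (fun h _ => expand h)
      _ = ∑ x ∈ A ×ˢ A, ∑ h : ZMod p, ∑ u ∈ J2, ∑ y ∈ J1,
            psi p (h * (x.1 * x.2⁻¹ + u + y)) := Finset.sum_comm
      _ = ∑ x ∈ A ×ˢ A, ∑ u ∈ J2, ∑ y ∈ J1, ∑ h : ZMod p,
            psi p (h * (x.1 * x.2⁻¹ + u + y)) := by
          refine Finset.sum_congr rfl (fun x _ => ?_)
          rw [Finset.sum_comm]
          refine Finset.sum_congr rfl (fun u _ => ?_)
          rw [Finset.sum_comm]
      _ = ∑ x ∈ A ×ˢ A, ∑ u ∈ J2, ∑ y ∈ J1,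
            (if x.1 * x.2⁻¹ + u + y = 0 then (p : ℂ) else 0) := by
          refine Finset.sum_congr rfl (fun x _ => Finset.sum_congr rfl
            (fun u _ => Finset.sum_congr rfl (fun y _ => ?_)))
          exact sum_psi_mul _
      _ = ∑ x ∈ A ×ˢ A, ((((J2 ×ˢ J1).filter
            (fun uy => x.1 * x.2⁻¹ + uy.1 + uy.2 = 0)).card : ℂ) * (p : ℂ)) := by
          refine Finset.sum_congr rfl (fun x _ => ?_)
          rw [← Finset.sum_product']
          rw [← Finset.sum_filter]
          rw [Finset.sum_const]
          simp [nsmul_eq_mul]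
      _ = (p : ℂ) * T := by
          rw [hT]
          rw [← Finset.sum_mul]
          push_cast
          ring
  have Kbound : ∀ h : ZMod p, h ≠ 0 → Complex.abs (K h) ≤ (n : ℝ) * Real.sqrt p := by
    intro h hh
    set S : ZMod p → ℂ := fun t => ∑ a ∈ A, psi p (t * a) with hS
    have hKS : K h = ∑ b ∈ A, S (h * b⁻¹) := by
      simp only [hK]
      rw [Finset.sum_product_right]
      refine Finset.sum_congr rfl (fun b _ => ?_)
      simp only [hS]
      refine Finset.sum_congr rfl (fun a _ => ?_)
      congr 1
      ring
    have tri : Complex.abs (K h) ≤ ∑ b ∈ A, Complex.abs (S (h * b⁻¹)) := by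
      rw [hKS]
      exact AbsoluteValue.sum_le _ _ _
    have sq1 : (∑ b ∈ A, Complex.abs (S (h * b⁻¹))) ^ 2
        ≤ (n : ℝ) * ∑ b ∈ A, (Complex.abs (S (h * b⁻¹))) ^ 2 := by
      have := sq_sum_le_card_mul_sum_sq (s := A)
        (f := fun b => Complex.abs (S (h * b⁻¹)))
      exact_mod_cast this
    have sq2 : ∑ b ∈ A, (Complex.abs (S (h * b⁻¹))) ^ 2
        ≤ ∑ t : ZMod p, (Complex.abs (S t)) ^ 2 := by
      have himg : ∑ b ∈ A, (Complex.abs (S (h * b⁻¹))) ^ 2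
          = ∑ t ∈ A.image (fun b => h * b⁻¹), (Complex.abs (S t)) ^ 2 := by
        rw [Finset.sum_image]
        intro b _ b' _ hbb
        have hinv : (b : ZMod p)⁻¹ = b'⁻¹ := mul_left_cancel₀ hh hbb
        exact inv_injective hinv
      rw [himg]
      refine Finset.sum_le_sum_of_subset_of_nonneg (Finset.subset_univ _) ?_
      intro i _ _
      positivity
    have pars : ∑ t : ZMod p, (Complex.abs (S t)) ^ 2 = (p : ℝ) * n := by
      have hpar := parseval (p := p) A
      simp only [hS]
      exact hpar
    have habsK : (Complex.abs (K h)) ^ 2 ≤ ((n : ℝ) * Real.sqrt p) ^ 2 := by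
      have e1 : ((n : ℝ) * Real.sqrt p) ^ 2 = (n : ℝ)^2 * p := by
        rw [mul_pow, Real.sq_sqrt (by positivity : (0:ℝ) ≤ (p:ℝ))]
      rw [e1]
      calc (Complex.abs (K h)) ^ 2
          ≤ (∑ b ∈ A, Complex.abs (S (h * b⁻¹))) ^ 2 := by
            apply pow_le_pow_left₀ (AbsoluteValue.nonneg _ _) tri
        _ ≤ (n : ℝ) * ∑ b ∈ A, (Complex.abs (S (h * b⁻¹))) ^ 2 := sq1
        _ ≤ (n : ℝ) * ((p : ℝ) * n) := by
            refine mul_le_mul_of_nonneg_left ?_ (by positivity)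
            rw [← pars]
            exact sq2
        _ = (n : ℝ)^2 * p := by ring
    exact (abs_le_of_sq_le_sq' habsK (by positivity)).2
  have upper : (p : ℝ) * T ≤ (n:ℝ)^2 * ((4*m+1) * (2*m+1))
      + ((n:ℝ) * Real.sqrt p) * (Real.sqrt ((p:ℝ) * (4*m+1)) * Real.sqrt ((p:ℝ) * (2*m+1))) := by
    have hsplit : (p : ℂ) * T = K 0 * G2 0 * G1 0
        + ∑ h ∈ Finset.univ.erase (0 : ZMod p), K h * G2 h * G1 h := by
      rw [← identity]
      exact (Finset.add_sum_erase _ _ (Finset.mem_univ 0)).symm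
    have hK0 : K 0 = ((n:ℂ))^2 := by
      simp only [hK, zero_mul, AddChar.map_zero_eq_one]
      rw [Finset.sum_const, Finset.card_product]
      push_cast
      ring
    have hG20 : G2 0 = ((4*m+1 : ℕ) : ℂ) := by
      simp only [hG2, zero_mul, AddChar.map_zero_eq_one]
      rw [Finset.sum_const, cardJ2]
      simp
    have hG10 : G1 0 = ((2*m+1 : ℕ) : ℂ) := by
      simp only [hG1, zero_mul, AddChar.map_zero_eq_one]
      rw [Finset.sum_const, cardJ1]
      simp
    have habs : (p : ℝ) * T = Complex.abs ((p : ℂ) * T) := by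
      rw [map_mul, Complex.abs_natCast, Complex.abs_natCast]
    have hmain : Complex.abs (K 0 * G2 0 * G1 0) = (n:ℝ)^2 * ((4*m+1) * (2*m+1)) := by
      rw [hK0, hG20, hG10, map_mul, map_mul, map_pow, Complex.abs_natCast,
        Complex.abs_natCast, Complex.abs_natCast]
      push_cast
      ring
    have CS : ∑ h ∈ Finset.univ.erase (0 : ZMod p), Complex.abs (G2 h) * Complex.abs (G1 h)
        ≤ Real.sqrt ((p:ℝ) * (4*m+1)) * Real.sqrt ((p:ℝ) * (2*m+1)) := by
      have hcs := Real.sum_mul_le_sqrt_mul_sqrt (Finset.univ.erase (0 : ZMod p))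
        (fun h => Complex.abs (G2 h)) (fun h => Complex.abs (G1 h))
      refine hcs.trans ?_
      have h2 : ∑ h ∈ Finset.univ.erase (0 : ZMod p), (Complex.abs (G2 h))^2
          ≤ (p:ℝ) * (4*m+1) := by
        have hsub : ∑ h ∈ Finset.univ.erase (0 : ZMod p), (Complex.abs (G2 h))^2
            ≤ ∑ h : ZMod p, (Complex.abs (G2 h))^2 :=
          Finset.sum_le_sum_of_subset_of_nonneg (Finset.subset_univ _)
            (fun i _ _ => by positivity)
        refine hsub.trans ?_
        have := parseval (p := p) J2
        simp only [hG2]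
        rw [this, cardJ2]
        push_cast
        norm_num
      have h1 : ∑ h ∈ Finset.univ.erase (0 : ZMod p), (Complex.abs (G1 h))^2
          ≤ (p:ℝ) * (2*m+1) := by
        have hsub : ∑ h ∈ Finset.univ.erase (0 : ZMod p), (Complex.abs (G1 h))^2
            ≤ ∑ h : ZMod p, (Complex.abs (G1 h))^2 :=
          Finset.sum_le_sum_of_subset_of_nonneg (Finset.subset_univ _)
            (fun i _ _ => by positivity)
        refine hsub.trans ?_
        have := parseval (p := p) J1
        simp only [hG1]
        rw [this, cardJ1]
        push_cast
        norm_num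
      have s2 : Real.sqrt (∑ h ∈ Finset.univ.erase (0 : ZMod p), (Complex.abs (G2 h))^2)
          ≤ Real.sqrt ((p:ℝ) * (4*m+1)) := Real.sqrt_le_sqrt h2
      have s1 : Real.sqrt (∑ h ∈ Finset.univ.erase (0 : ZMod p), (Complex.abs (G1 h))^2)
          ≤ Real.sqrt ((p:ℝ) * (2*m+1)) := Real.sqrt_le_sqrt h1
      exact mul_le_mul s2 s1 (Real.sqrt_nonneg _) (Real.sqrt_nonneg _)
    calc (p : ℝ) * T = Complex.abs ((p : ℂ) * T) := habs
      _ ≤ Complex.abs (K 0 * G2 0 * G1 0)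
          + Complex.abs (∑ h ∈ Finset.univ.erase (0 : ZMod p), K h * G2 h * G1 h) := by
          rw [hsplit]
          exact AbsoluteValue.add_le _ _ _
      _ ≤ (n:ℝ)^2 * ((4*m+1) * (2*m+1))
          + ∑ h ∈ Finset.univ.erase (0 : ZMod p), Complex.abs (K h * G2 h * G1 h) := by
          rw [hmain]
          exact add_le_add_right (AbsoluteValue.sum_le _ _ _) _
      _ ≤ (n:ℝ)^2 * ((4*m+1) * (2*m+1))
          + ∑ h ∈ Finset.univ.erase (0 : ZMod p),
              ((n:ℝ) * Real.sqrt p) * (Complex.abs (G2 h) * Complex.abs (G1 h)) := by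
          refine add_le_add_right (Finset.sum_le_sum (fun h hh => ?_)) _
          rw [map_mul, map_mul]
          have hne : h ≠ 0 := (Finset.mem_erase.mp hh).1
          have := Kbound h hne
          have hnn : (0:ℝ) ≤ Complex.abs (G2 h) * Complex.abs (G1 h) := mul_nonneg (AbsoluteValue.nonneg _ _) (AbsoluteValue.nonneg _ _)
          calc Complex.abs (K h) * Complex.abs (G2 h) * Complex.abs (G1 h)
              = Complex.abs (K h) * (Complex.abs (G2 h) * Complex.abs (G1 h)) := by ring
            _ ≤ ((n:ℝ) * Real.sqrt p) * (Complex.abs (G2 h) * Complex.abs (G1 h)) :=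
              mul_le_mul_of_nonneg_right this hnn
      _ ≤ (n:ℝ)^2 * ((4*m+1) * (2*m+1))
          + ((n:ℝ) * Real.sqrt p) * (Real.sqrt ((p:ℝ) * (4*m+1)) * Real.sqrt ((p:ℝ) * (2*m+1))) := by
          rw [← Finset.mul_sum]
          refine add_le_add_right (mul_le_mul_of_nonneg_left CS (by positivity)) _
  -- final arithmetic
  have hp12 : (12:ℝ) ≤ (p:ℝ) := by
    have : 12 ≤ p := le_trans (by omega : 12 ≤ 12 * m) h12
    exact_mod_cast this
  have hm12 : 12 * (m:ℝ) ≤ (p:ℝ) := by exact_mod_cast h12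
  have hnR : (0:ℝ) < (n:ℝ) := by exact_mod_cast hnpos
  have hpR : (0:ℝ) < (p:ℝ) := by linarith
  have hL : ((2*m+1 : ℕ):ℝ) * (n:ℝ)^2 ≤ 2 * (T:ℝ) := by
    have hnat : (2*m+1) * n^2 ≤ 2 * T := by
      calc (2*m+1) * n^2 ≤ (2*m+1) * (2 * F.card) := Nat.mul_le_mul_left _ step1
        _ = 2 * ((2*m+1) * F.card) := by ring
        _ ≤ 2 * T := Nat.mul_le_mul_left _ step2
    exact_mod_cast hnat
  have hsq : Real.sqrt ((p:ℝ) * (4*m+1)) * Real.sqrt ((p:ℝ) * (2*m+1))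
      ≤ (p:ℝ) * (Real.sqrt 2 * (2*(m:ℝ)+1)) := by
    have h1 : Real.sqrt ((p:ℝ)*(4*m+1)) * Real.sqrt ((p:ℝ)*(2*m+1))
        = Real.sqrt (((p:ℝ)*(4*m+1)) * ((p:ℝ)*(2*m+1))) :=
      (Real.sqrt_mul (by positivity) _).symm
    have h2 : ((p:ℝ)*(4*m+1)) * ((p:ℝ)*(2*m+1))
        ≤ ((p:ℝ) * (Real.sqrt 2 * (2*(m:ℝ)+1)))^2 := by
      have e : ((p:ℝ) * (Real.sqrt 2 * (2*(m:ℝ)+1)))^2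
          = (p:ℝ)^2 * ((Real.sqrt 2)^2 * (2*(m:ℝ)+1)^2) := by ring
      rw [e, Real.sq_sqrt (by norm_num : (0:ℝ) ≤ 2)]
      have hm0 : (0:ℝ) ≤ (m:ℝ) := by positivity
      have hdiff : (p:ℝ)^2 * (2 * (2*(m:ℝ)+1)^2)
          - ((p:ℝ)*(4*(m:ℝ)+1)) * ((p:ℝ)*(2*(m:ℝ)+1)) = (p:ℝ)^2 * (2*(m:ℝ)+1) := by
        ring
      have hnn : (0:ℝ) ≤ (p:ℝ)^2 * (2*(m:ℝ)+1) := by positivity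
      push_cast
      linarith
    rw [h1]
    calc Real.sqrt (((p:ℝ)*(4*m+1)) * ((p:ℝ)*(2*m+1)))
        ≤ Real.sqrt (((p:ℝ) * (Real.sqrt 2 * (2*(m:ℝ)+1)))^2) := Real.sqrt_le_sqrt h2
      _ = (p:ℝ) * (Real.sqrt 2 * (2*(m:ℝ)+1)) := Real.sqrt_sq (by positivity)
  set b : ℝ := (2*(m:ℝ)+1) with hb
  have hb0 : (0:ℝ) < b := by rw [hb]; positivity
  have key : b * ((p:ℝ) * (n:ℝ)^2)
      ≤ b * (2*(4*(m:ℝ)+1) * (n:ℝ)^2 + 2 * Real.sqrt 2 * (n:ℝ) * ((p:ℝ) * Real.sqrt p)) := by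
    have c1 : (p:ℝ) * (((2*m+1 : ℕ):ℝ) * (n:ℝ)^2) ≤ (p:ℝ) * (2 * (T:ℝ)) :=
      mul_le_mul_of_nonneg_left hL (le_of_lt hpR)
    have c2 : 2 * ((p:ℝ) * (T:ℝ)) ≤ 2 * ((n:ℝ)^2 * ((4*m+1) * (2*m+1))
        + ((n:ℝ) * Real.sqrt p) * (Real.sqrt ((p:ℝ) * (4*m+1)) * Real.sqrt ((p:ℝ) * (2*m+1)))) :=
      mul_le_mul_of_nonneg_left upper (by norm_num)
    have c3 : ((n:ℝ) * Real.sqrt p) * (Real.sqrt ((p:ℝ) * (4*m+1)) * Real.sqrt ((p:ℝ) * (2*m+1)))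
        ≤ ((n:ℝ) * Real.sqrt p) * ((p:ℝ) * (Real.sqrt 2 * b)) :=
      mul_le_mul_of_nonneg_left hsq (by positivity)
    have cast1 : ((2*m+1 : ℕ):ℝ) = b := by rw [hb]; push_cast; ring
    rw [cast1] at c1
    have expand : 2 * ((n:ℝ)^2 * ((4*(m:ℝ)+1) * b)) = b * (2*(4*(m:ℝ)+1) * (n:ℝ)^2) := by ring
    have expand2 : ((n:ℝ) * Real.sqrt p) * ((p:ℝ) * (Real.sqrt 2 * b))
        = b * (Real.sqrt 2 * (n:ℝ) * ((p:ℝ) * Real.sqrt p)) := by ring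
    have cast2 : ((4*m+1 : ℕ):ℝ) * ((2*m+1 : ℕ):ℝ) = (4*(m:ℝ)+1) * b := by
      rw [hb]; push_cast; ring
    calc b * ((p:ℝ) * (n:ℝ)^2) = (p:ℝ) * (b * (n:ℝ)^2) := by ring
      _ ≤ (p:ℝ) * (2 * (T:ℝ)) := c1
      _ = 2 * ((p:ℝ) * (T:ℝ)) := by ring
      _ ≤ 2 * ((n:ℝ)^2 * ((4*m+1) * (2*m+1))
          + ((n:ℝ) * Real.sqrt p) * (Real.sqrt ((p:ℝ) * (4*m+1)) * Real.sqrt ((p:ℝ) * (2*m+1)))) := c2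
      _ ≤ 2 * ((n:ℝ)^2 * ((4*m+1) * (2*m+1))
          + ((n:ℝ) * Real.sqrt p) * ((p:ℝ) * (Real.sqrt 2 * b))) := by linarith
      _ = 2 * ((n:ℝ)^2 * (((4*m+1 : ℕ):ℝ) * ((2*m+1 : ℕ):ℝ)))
          + 2 * (((n:ℝ) * Real.sqrt p) * ((p:ℝ) * (Real.sqrt 2 * b))) := by push_cast; ring
      _ = b * (2*(4*(m:ℝ)+1) * (n:ℝ)^2 + 2 * Real.sqrt 2 * (n:ℝ) * ((p:ℝ) * Real.sqrt p)) := by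
          rw [cast2]; ring
  have key2 : (p:ℝ) * (n:ℝ)^2
      ≤ 2*(4*(m:ℝ)+1) * (n:ℝ)^2 + 2 * Real.sqrt 2 * (n:ℝ) * ((p:ℝ) * Real.sqrt p) :=
    le_of_mul_le_mul_left key hb0
  have h4m : 2*(4*(m:ℝ)+1) ≤ (5/6) * (p:ℝ) := by linarith
  have key3 : (1/6) * ((p:ℝ) * (n:ℝ)^2) ≤ 2 * Real.sqrt 2 * (n:ℝ) * ((p:ℝ) * Real.sqrt p) := by
    have : 2*(4*(m:ℝ)+1) * (n:ℝ)^2 ≤ (5/6) * (p:ℝ) * (n:ℝ)^2 :=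
      mul_le_mul_of_nonneg_right h4m (by positivity)
    nlinarith [key2]
  have key4 : ((p:ℝ) * (n:ℝ)) * (n:ℝ) ≤ ((p:ℝ) * (n:ℝ)) * (12 * Real.sqrt 2 * Real.sqrt p) := by
    nlinarith [key3]
  have key5 : (n:ℝ) ≤ 12 * Real.sqrt 2 * Real.sqrt p :=
    le_of_mul_le_mul_left key4 (by positivity)
  have hs2 : Real.sqrt 2 ≤ 17/12 := by
    rw [show (17/12 : ℝ) = Real.sqrt ((17/12)^2) from (Real.sqrt_sq (by norm_num)).symm]
    apply Real.sqrt_le_sqrt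
    norm_num
  calc (n:ℝ) ≤ 12 * Real.sqrt 2 * Real.sqrt p := key5
    _ ≤ 12 * (17/12) * Real.sqrt p := by
        have := Real.sqrt_nonneg (p:ℝ)
        nlinarith
    _ = 17 * Real.sqrt p := by ring

end CompAux

/-- For every prime `p`, every `1 ≤ X ≤ p/12` and every `A ∈ 𝒮(X)`, `|A| ≪ p^{1/2}`
with an absolute implied constant. -/
theorem stmt2 :
    ∃ C : ℝ, 0 < C ∧ ∀ p : ℕ, p.Prime → ∀ X : ℝ, 1 ≤ X → X ≤ (p : ℝ) / 12 →
      ∀ A : Finset (ZMod p), SMem p X A →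
        (A.card : ℝ) ≤ C * Real.sqrt p := by
  refine ⟨17, by norm_num, ?_⟩
  intro p hp X hX1 hX2 A hA
  obtain ⟨h0, hpair⟩ := hA
  set m := ⌊X⌋₊ with hm_def
  have hm : 1 ≤ m := by
    apply Nat.le_floor
    exact_mod_cast hX1
  have h12 : 12 * m ≤ p := by
    have h1 : (m:ℝ) ≤ X := Nat.floor_le (by linarith : (0:ℝ) ≤ X)
    have h2 : (12:ℝ) * (m:ℝ) ≤ (p:ℝ) := by
      calc (12:ℝ) * (m:ℝ) ≤ 12 * X := by linarith
        _ ≤ (p:ℝ) := by linarith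
    exact_mod_cast h2
  have hpcond : ∀ s₁ ∈ A, ∀ s₂ ∈ A,
      valMin p (s₁ * s₂⁻¹) ≤ m ∨ valMin p (s₂ * s₁⁻¹) ≤ m := by
    intro s₁ h₁ s₂ h₂
    rcases hpair s₁ h₁ s₂ h₂ with h | h
    · exact Or.inl (Nat.le_floor h)
    · exact Or.inr (Nat.le_floor h)
  exact CompAux.main_bound p hp m hm h12 A h0 hpcond
end

section
/- Let p be a prime, let n ≥ 2 be an integer, and let ε > 0 be fixed. For every real X with 1 ≤ X ≤ 0.24·p and every integer k with 1 ≤ k ≤ n−1, one has R_n(X) ≪_{ε,n} X^{1/k+ε} + X^{1+1/k+ε}/p^{1/k}, where the implied constant depends only on ε and n. -/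
/-- `A ∈ ℛ_n(X)`: `A ⊆ 𝔽_p^*` and every product of `n` pairwise distinct elements of `A`
is small mod `p`. -/
def RMem (p n : ℕ) (X : ℝ) (A : Finset (ZMod p)) : Prop :=
  (0 : ZMod p) ∉ A ∧ ∀ s : Fin n → ZMod p, (∀ i, s i ∈ A) → Function.Injective s →
    (valMin p (∏ i, s i) : ℝ) ≤ X


section Aux


open Finset in
theorem divisor_bound_s5 (δ : ℝ) (hδ : 0 < δ) :
    ∃ C : ℝ, 1 ≤ C ∧ ∀ M : ℕ, M ≠ 0 → (M.divisors.card : ℝ) ≤ C * (M : ℝ) ^ δ := by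
  set a : ℝ := δ * Real.log 2 with ha
  have ha0 : 0 < a := mul_pos hδ (Real.log_pos (by norm_num))
  set c : ℝ := max 1 (1 / a) with hc
  have hc1 : 1 ≤ c := le_max_left _ _
  set N : ℕ := ⌈(2:ℝ) ^ (1/δ)⌉₊ with hN
  refine ⟨c ^ (N + 1), one_le_pow₀ hc1, ?_⟩
  intro M hM
  -- key per-prime inequality
  have key : ∀ q ∈ M.primeFactors,
      ((M.factorization q + 1 : ℕ) : ℝ) ≤
        (if q ≤ N then c else 1) * (q : ℝ) ^ (δ * (M.factorization q : ℝ)) := by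
    intro q hq
    have hqp : q.Prime := Nat.prime_of_mem_primeFactors hq
    have hq2 : (2:ℝ) ≤ (q:ℝ) := by exact_mod_cast hqp.two_le
    set e : ℕ := M.factorization q with he
    by_cases hsmall : q ≤ N
    · simp only [hsmall, if_true]
      have h1 : (1 : ℝ) + a * e ≤ (q:ℝ) ^ (δ * (e:ℝ)) := by
        have h2 : (2:ℝ) ^ (δ * (e:ℝ)) ≤ (q:ℝ) ^ (δ * (e:ℝ)) :=
          Real.rpow_le_rpow (by norm_num) hq2 (by positivity)
        have h3 : (1 : ℝ) + a * e ≤ (2:ℝ) ^ (δ * (e:ℝ)) := by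
          rw [show (2:ℝ) ^ (δ * (e:ℝ)) = Real.exp (δ * e * Real.log 2) from
            Real.rpow_def_of_pos (by norm_num) _ |>.trans (by rw [mul_comm])]
          have := Real.add_one_le_exp (δ * e * Real.log 2)
          calc (1:ℝ) + a * e = δ * e * Real.log 2 + 1 := by ring
          _ ≤ _ := this
        linarith
      have h4 : ((e + 1 : ℕ) : ℝ) ≤ c * (1 + a * e) := by
        push_cast
        rcases le_total a 1 with h | h
        · have hca : c ≥ 1 / a := le_max_right _ _
          have h1a : (1:ℝ) ≤ 1/a := by
            rw [le_div_iff₀ ha0]; linarith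
          have key : (1/a) * (1 + a * e) = 1/a + e := by field_simp
          have : (1:ℝ) + e ≤ (1/a) * (1 + a * e) := by
            rw [key]; linarith
          have h2 : (1/a) * (1 + a * e) ≤ c * (1 + a * e) :=
            mul_le_mul_of_nonneg_right hca (by positivity)
          linarith
        · have h1 : (1:ℝ) + (e:ℝ) ≤ 1 + a * e := by nlinarith [Nat.cast_nonneg (α := ℝ) e]
          have h2 : (1:ℝ) * (1 + a * e) ≤ c * (1 + a * e) :=
            mul_le_mul_of_nonneg_right hc1 (by positivity)
          linarith
      calc ((e + 1 : ℕ) : ℝ) ≤ c * (1 + a * e) := h4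
      _ ≤ c * (q:ℝ) ^ (δ * (e:ℝ)) := by
        apply mul_le_mul_of_nonneg_left h1 (by linarith)
    · simp only [hsmall, if_false, one_mul]
      have hqN : (2:ℝ) ^ (1/δ) ≤ (q:ℝ) := by
        have : (N:ℝ) ≤ q := by exact_mod_cast (not_le.mp hsmall).le
        exact le_trans (Nat.le_ceil _) this
      have h2 : (2:ℝ) ≤ (q:ℝ) ^ δ := by
        calc (2:ℝ) = ((2:ℝ) ^ (1/δ)) ^ δ := by
              rw [← Real.rpow_mul (by norm_num), one_div, inv_mul_cancel₀ hδ.ne', Real.rpow_one]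
        _ ≤ (q:ℝ) ^ δ := Real.rpow_le_rpow (by positivity) hqN hδ.le
      have : ((e + 1 : ℕ) : ℝ) ≤ (2:ℝ) ^ e := by
        exact_mod_cast Nat.succ_le_of_lt (Nat.lt_two_pow_self (n := e))
      calc ((e + 1 : ℕ) : ℝ) ≤ (2:ℝ) ^ e := this
      _ ≤ ((q:ℝ) ^ δ) ^ e := pow_le_pow_left₀ (by norm_num) h2 e
      _ = (q:ℝ) ^ (δ * (e:ℝ)) := by
          rw [← Real.rpow_natCast ((q:ℝ) ^ δ), ← Real.rpow_mul (by positivity)]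
  -- assemble
  have hd : (M.divisors.card : ℝ) = ∏ q ∈ M.primeFactors, ((M.factorization q + 1 : ℕ) : ℝ) := by
    rw [Nat.card_divisors hM]
    push_cast
    rfl
  have hMδ : (M : ℝ) ^ δ = ∏ q ∈ M.primeFactors, (q : ℝ) ^ (δ * (M.factorization q : ℝ)) := by
    conv_lhs => rw [← Nat.factorization_prod_pow_eq_self hM]
    rw [Nat.prod_factorization_eq_prod_primeFactors]
    push_cast
    rw [← Real.finset_prod_rpow _ _ (fun q hq => by positivity)]
    refine Finset.prod_congr rfl fun q hq => ?_
    rw [← Real.rpow_natCast (q:ℝ), ← Real.rpow_mul (by positivity), mul_comm]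
  rw [hd, hMδ]
  calc ∏ q ∈ M.primeFactors, ((M.factorization q + 1 : ℕ) : ℝ)
      ≤ ∏ q ∈ M.primeFactors, (if q ≤ N then c else 1) * (q : ℝ) ^ (δ * (M.factorization q : ℝ)) :=
        Finset.prod_le_prod (fun q _ => by positivity) key
    _ = (∏ q ∈ M.primeFactors, (if q ≤ N then c else 1)) *
        ∏ q ∈ M.primeFactors, (q : ℝ) ^ (δ * (M.factorization q : ℝ)) := by
        rw [Finset.prod_mul_distrib]
    _ ≤ c ^ (N + 1) * ∏ q ∈ M.primeFactors, (q : ℝ) ^ (δ * (M.factorization q : ℝ)) := by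
        apply mul_le_mul_of_nonneg_right _ (Finset.prod_nonneg fun q _ => by positivity)
        calc ∏ q ∈ M.primeFactors, (if q ≤ N then c else 1)
            = ∏ q ∈ M.primeFactors.filter (· ≤ N), c := by
              rw [Finset.prod_filter]
        _ = c ^ (M.primeFactors.filter (· ≤ N)).card := Finset.prod_const c
        _ ≤ c ^ (N + 1) := by
              apply pow_le_pow_right₀ hc1
              calc (M.primeFactors.filter (· ≤ N)).card ≤ (Finset.range (N+1)).card := by
                    apply Finset.card_le_card
                    intro q hq
                    simp only [Finset.mem_filter] at hq
                    simp [Nat.lt_succ_iff, hq.2]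
              _ = N + 1 := Finset.card_range _



section ValMin
variable {p : ℕ} [NeZero p]

lemma valMin_neg (x : ZMod p) : valMin p (-x) = valMin p x := by
  unfold valMin
  rcases eq_or_ne x 0 with rfl | hx
  · simp
  · rw [ZMod.neg_val, if_neg hx, Nat.sub_sub_self (ZMod.val_le x), min_comm]

lemma valMin_cast (x : ZMod p) :
    ((valMin p x : ℕ) : ZMod p) = x ∨ ((valMin p x : ℕ) : ZMod p) = -x := by
  unfold valMin
  rcases min_cases x.val (p - x.val) with ⟨h, _⟩ | ⟨h, _⟩
  · left; rw [h, ZMod.natCast_val, ZMod.cast_id]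
  · right
    rw [h, Nat.cast_sub (ZMod.val_le x), ZMod.natCast_self, ZMod.natCast_val, ZMod.cast_id,
      zero_sub]

lemma valMin_pos {x : ZMod p} (hx : x ≠ 0) : 0 < valMin p x := by
  unfold valMin
  rcases Nat.eq_zero_or_pos (min x.val (p - x.val)) with h | h
  · exfalso
    rcases Nat.min_eq_zero_iff.mp h with h | h
    · exact hx ((ZMod.val_eq_zero x).mp h)
    · exact absurd (Nat.le_of_sub_eq_zero h) (not_le.mpr (ZMod.val_lt x))
  · exact h

/-- product of signed representatives -/
lemma prod_valMin_cast {α : Type*} (S : Finset α) (g : α → ZMod p) :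
    ∃ u : ZMod p, (u = 1 ∨ u = -1) ∧
      ((∏ a ∈ S, valMin p (g a) : ℕ) : ZMod p) = u * ∏ a ∈ S, g a := by
  classical
  induction S using Finset.cons_induction with
  | empty => exact ⟨1, Or.inl rfl, by simp⟩
  | cons b S hb ih =>
    obtain ⟨u, hu, hprod⟩ := ih
    rcases valMin_cast (g b) with h | h
    · refine ⟨u, hu, ?_⟩
      rw [Finset.prod_cons, Finset.prod_cons, Nat.cast_mul, h, hprod]
      ring
    · refine ⟨-u, ?_, ?_⟩
      · rcases hu with h' | h'
        · right; rw [h']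
        · left; rw [h']; ring
      · rw [Finset.prod_cons, Finset.prod_cons, Nat.cast_mul, h, hprod]
        ring

end ValMin


lemma RMem.prod_le {p n : ℕ} {X : ℝ} {A : Finset (ZMod p)} (hA : RMem p n X A)
    (F : Finset (ZMod p)) (hFA : F ⊆ A) (hF : F.card = n) :
    (valMin p (∏ x ∈ F, x) : ℝ) ≤ X := by
  classical
  have eqv : Fin n ≃ {x // x ∈ F} := (finCongr hF.symm).trans F.equivFin.symm
  have h1 : (∏ i : Fin n, ((eqv i : {x // x ∈ F}) : ZMod p)) = ∏ x ∈ F, x := by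
    rw [Equiv.prod_comp eqv (fun x : {x // x ∈ F} => (x : ZMod p))]
    exact Finset.prod_coe_sort F (fun x => x)
  have := hA.2 (fun i => (eqv i : ZMod p))
    (fun i => hFA (eqv i).2)
    (fun i j hij => eqv.injective (Subtype.val_injective hij))
  rwa [h1] at this

/-- Core counting lemma. -/
lemma core_count {p n : ℕ} (hp : p.Prime) {X : ℝ} (hX : 1 ≤ X) {k : ℕ}
    (hk1 : 1 ≤ k) (hkn : k ≤ n - 1) (hn : 2 ≤ n)
    {A : Finset (ZMod p)} (hA : RMem p n X A) (hcard : n ≤ A.card) :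
    ∃ (N : ℕ) (𝓜 : Finset ℕ),
      A.card ≤ 2 * N + n ∧
      (∀ M ∈ 𝓜, 1 ≤ M ∧ M ≤ ⌊X⌋₊ ^ k) ∧
      𝓜.card ≤ 2 * (⌊X⌋₊ + 1) * (⌊X⌋₊ ^ k / p + 1) ∧
      N.choose k ≤ ∑ M ∈ 𝓜, M.divisors.card ^ k := by
  classical
  haveI : Fact p.Prime := ⟨hp⟩
  haveI : NeZero p := ⟨hp.pos.ne'⟩
  set x0 : ℕ := ⌊X⌋₊ with hx0def
  have hkn' : k ≤ n := le_trans hkn (Nat.sub_le n 1)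
  -- the fixed sets
  obtain ⟨T₁, hT₁A, hT₁⟩ := Finset.exists_subset_card_eq
    (show n - 1 ≤ A.card by omega)
  obtain ⟨T₂, hT₂T₁, hT₂⟩ := Finset.exists_subset_card_eq
    (show n - k ≤ T₁.card by omega)
  have hmemA : ∀ x ∈ A, x ≠ 0 := fun x hx h => hA.1 (h ▸ hx)
  set P : ZMod p := ∏ x ∈ T₁, x with hPdef
  set Q : ZMod p := ∏ x ∈ T₂, x with hQdef
  have hP : P ≠ 0 := Finset.prod_ne_zero_iff.mpr fun x hx => hmemA x (hT₁A hx)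
  have hQ : Q ≠ 0 := Finset.prod_ne_zero_iff.mpr fun x hx => hmemA x (hT₁A (hT₂T₁ hx))
  have hPk : P ^ k ≠ 0 := pow_ne_zero _ hP
  set μ : ZMod p := Q * (P ^ k)⁻¹ with hμdef
  have hμ : μ ≠ 0 := mul_ne_zero hQ (inv_ne_zero hPk)
  set A₀ : Finset (ZMod p) := A \ T₁ with hA₀def
  have hA₀card : A₀.card + (n - 1) = A.card := by
    rw [hA₀def, ← hT₁]
    exact Finset.card_sdiff_add_card_eq_card hT₁A
  set m : ZMod p → ℕ := fun a => valMin p (a * P) with hmdef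
  -- single-element bound
  have hm_le : ∀ a ∈ A₀, m a ≤ x0 := by
    intro a ha
    rw [Finset.mem_sdiff] at ha
    have hins : (insert a T₁).card = n := by
      rw [Finset.card_insert_of_notMem ha.2, hT₁]; omega
    have hsub : insert a T₁ ⊆ A := Finset.insert_subset ha.1 hT₁A
    have := hA.prod_le _ hsub hins
    rw [Finset.prod_insert ha.2] at this
    exact Nat.le_floor this
  have hm_pos : ∀ a ∈ A₀, 1 ≤ m a := by
    intro a ha
    rw [Finset.mem_sdiff] at ha
    exact valMin_pos (mul_ne_zero (hmemA a ha.1) hP)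
  -- the k-fold product bound
  have key : ∀ S : Finset (ZMod p), S ⊆ A₀ → S.card = k →
      valMin p (μ * ((∏ a ∈ S, m a : ℕ) : ZMod p)) ≤ x0 := by
    intro S hS hSk
    obtain ⟨u, hu, hprod⟩ := prod_valMin_cast S (fun a => a * P)
    have h1 : (∏ a ∈ S, a * P) = (∏ a ∈ S, a) * P ^ k := by
      rw [Finset.prod_mul_distrib, Finset.prod_const, hSk]
    have hdisj : Disjoint S T₂ := by
      rw [Finset.disjoint_left]
      intro a haS haT₂
      exact (Finset.mem_sdiff.mp (hS haS)).2 (hT₂T₁ haT₂)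
    have hcardU : (S ∪ T₂).card = n := by
      rw [Finset.card_union_of_disjoint hdisj, hSk, hT₂]; omega
    have hsubU : S ∪ T₂ ⊆ A := Finset.union_subset
      (hS.trans (Finset.sdiff_subset)) (hT₂T₁.trans hT₁A)
    have hbound := hA.prod_le _ hsubU hcardU
    rw [Finset.prod_union hdisj] at hbound
    have hbound' : valMin p ((∏ a ∈ S, a) * Q) ≤ x0 := Nat.le_floor hbound
    have h2 : μ * ((∏ a ∈ S, m a : ℕ) : ZMod p) = u * ((∏ a ∈ S, a) * Q) := by
      show μ * ((∏ a ∈ S, valMin p (a * P) : ℕ) : ZMod p) = _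
      rw [hprod, h1, hμdef]
      field_simp
    rw [h2]
    rcases hu with rfl | rfl
    · rwa [one_mul]
    · rw [neg_one_mul, valMin_neg]
      exact hbound'
  -- split A₀ in two halves on which m is injective
  set A₁ : Finset (ZMod p) := A₀.filter (fun a => (a * P).val ≤ p - (a * P).val) with hA₁def
  set A₂ : Finset (ZMod p) := A₀ \ A₁ with hA₂def
  have hinj₁ : Set.InjOn m A₁ := by
    intro a ha b hb hab
    simp only [hA₁def, Finset.coe_filter, Set.mem_setOf_eq] at ha hb
    rw [hmdef] at hab
    simp only at hab
    unfold valMin at hab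
    rw [min_eq_left ha.2, min_eq_left hb.2] at hab
    exact mul_left_injective₀ hP (ZMod.val_injective p hab)
  have hinj₂ : Set.InjOn m A₂ := by
    intro a ha b hb hab
    simp only [hA₂def, Finset.coe_sdiff, Set.mem_diff, Finset.mem_coe,
      Finset.mem_filter, hA₁def] at ha hb
    have ha2 : ¬ (a * P).val ≤ p - (a * P).val := fun h => ha.2 ⟨ha.1, h⟩
    have hb2 : ¬ (b * P).val ≤ p - (b * P).val := fun h => hb.2 ⟨hb.1, h⟩
    rw [hmdef] at hab
    simp only at hab
    unfold valMin at hab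
    rw [min_eq_right (le_of_not_ge ha2), min_eq_right (le_of_not_ge hb2)] at hab
    have hva : (a * P).val < p := ZMod.val_lt _
    have hvb : (b * P).val < p := ZMod.val_lt _
    have : (a * P).val = (b * P).val := by omega
    exact mul_left_injective₀ hP (ZMod.val_injective p this)
  -- choose the bigger half
  have hhalf : ∃ B : Finset (ZMod p), B ⊆ A₀ ∧ Set.InjOn m B ∧ A₀.card ≤ 2 * B.card := by
    have hcards : A₂.card + A₁.card = A₀.card :=
      Finset.card_sdiff_add_card_eq_card (Finset.filter_subset _ _)
    rcases le_total A₁.card A₂.card with h | h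
    · exact ⟨A₂, Finset.sdiff_subset, hinj₂, by omega⟩
    · exact ⟨A₁, Finset.filter_subset _ _, hinj₁, by omega⟩
  obtain ⟨B, hBA₀, hBinj, hBcard⟩ := hhalf
  -- the set of admissible integer products
  set 𝓜 : Finset ℕ := (Finset.Icc 1 (x0 ^ k)).filter
    (fun M => valMin p (μ * (M : ZMod p)) ≤ x0) with h𝓜def
  refine ⟨B.card, 𝓜, by omega, ?_, ?_, ?_⟩
  · intro M hM
    rw [h𝓜def, Finset.mem_filter, Finset.mem_Icc] at hM
    exact ⟨hM.1.1, hM.1.2⟩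
  · -- card of 𝓜
    have : 𝓜.card ≤ ((Finset.range (x0 + 1) ×ˢ Finset.range 2) ×ˢ
        Finset.range (x0 ^ k / p + 1)).card := by
      refine Finset.card_le_card_of_injOn
        (fun M => ((valMin p (μ * (M : ZMod p)),
          if (μ * (M : ZMod p)).val ≤ p - (μ * (M : ZMod p)).val then 0 else 1), M / p))
        ?_ ?_
      · intro M hM
        rw [h𝓜def, Finset.mem_coe, Finset.mem_filter, Finset.mem_Icc] at hM
        simp only [Finset.mem_coe, Finset.mem_product, Finset.mem_range]
        refine ⟨⟨by omega, ?_⟩, ?_⟩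
        · split <;> omega
        · have := Nat.div_le_div_right (c := p) hM.1.2
          omega
      · intro M₁ hM₁ M₂ hM₂ heq
        simp only [Prod.mk.injEq] at heq
        obtain ⟨⟨hval, hbit⟩, hdiv⟩ := heq
        have hv₁ : (μ * (M₁ : ZMod p)).val < p := ZMod.val_lt _
        have hv₂ : (μ * (M₂ : ZMod p)).val < p := ZMod.val_lt _
        have hveq : (μ * (M₁ : ZMod p)).val = (μ * (M₂ : ZMod p)).val := by
          unfold valMin at hval
          by_cases h₁ : (μ * (M₁ : ZMod p)).val ≤ p - (μ * (M₁ : ZMod p)).val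
          · by_cases h₂ : (μ * (M₂ : ZMod p)).val ≤ p - (μ * (M₂ : ZMod p)).val
            · rw [min_eq_left h₁, min_eq_left h₂] at hval; exact hval
            · simp [h₁, h₂] at hbit
          · by_cases h₂ : (μ * (M₂ : ZMod p)).val ≤ p - (μ * (M₂ : ZMod p)).val
            · simp [h₁, h₂] at hbit
            · rw [min_eq_right (le_of_not_ge h₁), min_eq_right (le_of_not_ge h₂)] at hval
              omega
        have hcast : (M₁ : ZMod p) = (M₂ : ZMod p) :=
          mul_left_cancel₀ hμ (ZMod.val_injective p hveq)
        have hmod : M₁ % p = M₂ % p := by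
          have := congrArg ZMod.val hcast
          rwa [ZMod.val_natCast, ZMod.val_natCast] at this
        rw [← Nat.div_add_mod M₁ p, ← Nat.div_add_mod M₂ p, hdiv, hmod]
    calc 𝓜.card ≤ _ := this
    _ ≤ 2 * (x0 + 1) * (x0 ^ k / p + 1) := by
        rw [Finset.card_product, Finset.card_product, Finset.card_range,
          Finset.card_range, Finset.card_range]
        ring_nf
        omega
  · -- the main injection
    rw [← Finset.card_powersetCard]
    have hstep : (Finset.powersetCard k B).card ≤
        (𝓜.sigma (fun M => Finset.powersetCard k M.divisors)).card := by
      refine Finset.card_le_card_of_injOn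
        (fun S => (⟨∏ a ∈ S, m a, S.image m⟩ : Σ _ : ℕ, Finset ℕ)) ?_ ?_
      · intro S hS
        rw [Finset.mem_coe, Finset.mem_powersetCard] at hS
        obtain ⟨hSB, hSk⟩ := hS
        have hSA₀ : S ⊆ A₀ := hSB.trans hBA₀
        have hMS1 : 1 ≤ ∏ a ∈ S, m a := Finset.one_le_prod' fun a ha => hm_pos a (hSA₀ ha)
        have hMSle : ∏ a ∈ S, m a ≤ x0 ^ k := by
          calc ∏ a ∈ S, m a ≤ x0 ^ S.card :=
                Finset.prod_le_pow_card S m x0 (fun a ha => hm_le a (hSA₀ ha))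
          _ = x0 ^ k := by rw [hSk]
        rw [Finset.mem_coe, Finset.mem_sigma]
        constructor
        · rw [h𝓜def, Finset.mem_filter, Finset.mem_Icc]
          exact ⟨⟨hMS1, hMSle⟩, key S hSA₀ hSk⟩
        · rw [Finset.mem_powersetCard]
          constructor
          · intro t ht
            rw [Finset.mem_image] at ht
            obtain ⟨a, haS, rfl⟩ := ht
            rw [Nat.mem_divisors]
            exact ⟨Finset.dvd_prod_of_mem m haS, Nat.one_le_iff_ne_zero.mp hMS1⟩
          · exact (Finset.card_image_of_injOn (hBinj.mono (by exact_mod_cast hSB))).trans hSk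
      · intro S₁ hS₁ S₂ hS₂ heq
        rw [Finset.mem_coe, Finset.mem_powersetCard] at hS₁ hS₂
        have himg : S₁.image m = S₂.image m := by
          have := congrArg Sigma.snd heq
          exact this
        ext a
        constructor
        · intro ha
          have : m a ∈ S₂.image m := himg ▸ Finset.mem_image_of_mem m ha
          rw [Finset.mem_image] at this
          obtain ⟨b, hb, hba⟩ := this
          rwa [← hBinj (hS₂.1 hb) (hS₁.1 ha) hba]
        · intro ha
          have : m a ∈ S₁.image m := himg ▸ Finset.mem_image_of_mem m ha
          rw [Finset.mem_image] at this
          obtain ⟨b, hb, hba⟩ := this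
          rwa [← hBinj (hS₁.1 hb) (hS₂.1 ha) hba]
    calc (Finset.powersetCard k B).card ≤ _ := hstep
    _ = ∑ M ∈ 𝓜, (Finset.powersetCard k M.divisors).card := Finset.card_sigma _ _
    _ ≤ ∑ M ∈ 𝓜, M.divisors.card ^ k := by
        apply Finset.sum_le_sum
        intro M _
        rw [Finset.card_powersetCard]
        exact Nat.choose_le_pow _ _


lemma real_add_rpow_le {a b r : ℝ} (ha : 0 ≤ a) (hb : 0 ≤ b) (hr : 0 ≤ r) (hr1 : r ≤ 1) :
    (a + b) ^ r ≤ a ^ r + b ^ r := by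
  have h := NNReal.rpow_add_le_add_rpow a.toNNReal b.toNNReal hr hr1
  have h2 := NNReal.coe_le_coe.mpr h
  push_cast at h2
  rwa [Real.coe_toNNReal a ha, Real.coe_toNNReal b hb] at h2

end Aux

set_option maxHeartbeats 1000000 in
/-- For fixed `n ≥ 2` and `ε > 0`: for every prime `p`, every `1 ≤ X ≤ 0.24 p` and every
integer `1 ≤ k ≤ n-1`, `R_n(X) ≪_{ε,n} X^{1/k+ε} + X^{1+1/k+ε}/p^{1/k}`. -/
theorem stmt5 (n : ℕ) (hn : 2 ≤ n) (ε : ℝ) (hε : 0 < ε) :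
    ∃ C : ℝ, 0 < C ∧ ∀ p : ℕ, p.Prime → ∀ X : ℝ, 1 ≤ X → X ≤ 0.24 * p →
      ∀ k : ℕ, 1 ≤ k → k ≤ n - 1 →
        ∀ A : Finset (ZMod p), RMem p n X A →
          (A.card : ℝ) ≤ C * (X ^ (1 / (k : ℝ) + ε) + X ^ (1 + 1 / (k : ℝ) + ε) / (p : ℝ) ^ (1 / (k : ℝ))) := by
  have hn0 : 0 < n := by omega
  set δ : ℝ := ε / n with hδdef
  have hnR : (0:ℝ) < n := by exact_mod_cast hn0
  have hδ : 0 < δ := div_pos hε hnR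
  obtain ⟨Cδ, hCδ1, hCδ⟩ := divisor_bound_s5 δ hδ
  have hCδ0 : 0 < Cδ := lt_of_lt_of_le one_pos hCδ1
  set K₁ : ℝ := 4 * n.factorial * Cδ ^ n with hK₁def
  have hK₁pos : 0 < K₁ := by positivity
  set K₂ : ℝ := max K₁ 1 with hK₂def
  have hK₂1 : 1 ≤ K₂ := le_max_right _ _
  have hK₂pos : 0 < K₂ := lt_of_lt_of_le one_pos hK₂1
  refine ⟨2 * K₂ + 5 * n + 2, by positivity, ?_⟩
  intro p hp X hX1 hXp k hk1 hkn A hA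
  have hXpos : 0 < X := lt_of_lt_of_le one_pos hX1
  have hkpos : (0:ℝ) < k := by exact_mod_cast hk1
  have hkne : (k:ℝ) ≠ 0 := ne_of_gt hkpos
  have hk1R : (1:ℝ) ≤ k := by exact_mod_cast hk1
  have hppos : (0:ℝ) < p := by exact_mod_cast hp.pos
  have hinvk0 : (0:ℝ) ≤ 1 / (k:ℝ) := by positivity
  have hinvk1 : 1 / (k:ℝ) ≤ 1 := by
    rw [div_le_one hkpos]; exact hk1R
  set R : ℝ := X ^ (1 / (k:ℝ) + ε) + X ^ (1 + 1 / (k:ℝ) + ε) / (p:ℝ) ^ (1 / (k:ℝ)) with hRdef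
  have hrp1 : (1:ℝ) ≤ X ^ (1 / (k:ℝ) + ε) := by
    calc (1:ℝ) = X ^ (0:ℝ) := (Real.rpow_zero X).symm
    _ ≤ X ^ (1 / (k:ℝ) + ε) := Real.rpow_le_rpow_of_exponent_le hX1 (by positivity)
  have hR1 : 1 ≤ R := by
    have h2 : 0 ≤ X ^ (1 + 1 / (k:ℝ) + ε) / (p:ℝ) ^ (1 / (k:ℝ)) := by positivity
    rw [hRdef]; linarith
  have hCR : ∀ y : ℝ, y ≤ 2 * K₂ * R + 3 * n → y ≤ (2 * K₂ + 5 * n + 2) * R := by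
    intro y hy
    have h3 : (0:ℝ) ≤ (2 * n + 2) * (R - 1) := by
      apply mul_nonneg (by positivity); linarith
    have h4 : (0:ℝ) ≤ 3 * (n:ℝ) * (R - 1) := by
      apply mul_nonneg (by positivity); linarith
    nlinarith
  by_cases hsmall : A.card < n
  · apply hCR
    have h5 : (A.card:ℝ) ≤ n := by exact_mod_cast (le_of_lt hsmall)
    nlinarith [mul_pos (mul_pos two_pos hK₂pos) (lt_of_lt_of_le one_pos hR1)]
  push_neg at hsmall
  obtain ⟨N, 𝓜, hAN, h𝓜mem, h𝓜card, hNchoose⟩ := core_count hp hX1 hk1 hkn hn hA hsmall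
  set x0 := ⌊X⌋₊ with hx0def
  have hx01 : 1 ≤ x0 := Nat.le_floor (by exact_mod_cast hX1)
  have hx0X : (x0:ℝ) ≤ X := Nat.floor_le hXpos.le
  have hx0pos : (0:ℝ) < x0 := by exact_mod_cast hx01
  set E : ℝ := Cδ * X ^ ((k:ℝ) * δ) with hEdef
  have hE0 : 0 ≤ E := by positivity
  have hE : ∀ M ∈ 𝓜, (M.divisors.card : ℝ) ≤ E := by
    intro M hM
    obtain ⟨hM1, hM2⟩ := h𝓜mem M hM
    have hMne : M ≠ 0 := by omega
    calc (M.divisors.card : ℝ) ≤ Cδ * (M:ℝ) ^ δ := hCδ M hMne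
    _ ≤ E := by
        rw [hEdef]
        apply mul_le_mul_of_nonneg_left _ hCδ0.le
        have hMX : (M:ℝ) ≤ X ^ (k:ℝ) := by
          calc (M:ℝ) ≤ ((x0:ℕ):ℝ)^k := by exact_mod_cast hM2
          _ ≤ X ^ k := pow_le_pow_left₀ (by positivity) hx0X k
          _ = X ^ (k:ℝ) := (Real.rpow_natCast X k).symm
        calc (M:ℝ) ^ δ ≤ (X ^ (k:ℝ)) ^ δ := Real.rpow_le_rpow (by positivity) hMX hδ.le
        _ = X ^ ((k:ℝ) * δ) := by rw [← Real.rpow_mul hXpos.le]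
  set W : ℝ := ((N + 1 - k : ℕ) : ℝ) with hWdef
  have hW0 : 0 ≤ W := Nat.cast_nonneg _
  have step1 : W ^ k ≤ (n.factorial : ℝ) * (N.choose k) := by
    have h := Nat.pow_le_choose (α := ℝ) k N
    have hfact : (k.factorial : ℝ) ≤ n.factorial := by
      exact_mod_cast Nat.factorial_le (show k ≤ n by omega)
    have hkfpos : (0:ℝ) < k.factorial := by exact_mod_cast k.factorial_pos
    have h' := (div_le_iff₀ hkfpos).mp h
    have hch0 : (0:ℝ) ≤ (N.choose k : ℝ) := Nat.cast_nonneg _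
    calc W ^ k ≤ (N.choose k : ℝ) * k.factorial := by
          rw [hWdef]; exact_mod_cast h'
    _ ≤ (n.factorial:ℝ) * (N.choose k) := by
        rw [mul_comm]; exact mul_le_mul_of_nonneg_right hfact hch0
  have step2 : (N.choose k : ℝ) ≤ (𝓜.card : ℝ) * E ^ k := by
    calc (N.choose k : ℝ) ≤ ∑ M ∈ 𝓜, ((M.divisors.card : ℝ))^k := by
          have : ((N.choose k : ℕ) : ℝ) ≤ ((∑ M ∈ 𝓜, M.divisors.card ^ k : ℕ) : ℝ) := by
            exact_mod_cast hNchoose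
          push_cast at this
          exact this
    _ ≤ ∑ M ∈ 𝓜, E ^ k :=
        Finset.sum_le_sum fun M hM => pow_le_pow_left₀ (Nat.cast_nonneg _) (hE M hM) k
    _ = (𝓜.card : ℝ) * E ^ k := by rw [Finset.sum_const, nsmul_eq_mul]
  have step3 : (𝓜.card : ℝ) ≤ 4 * X * (X ^ (k:ℝ) / p + 1) := by
    have hcast : (𝓜.card : ℝ) ≤ 2 * ((x0:ℝ) + 1) * (((x0 ^ k / p : ℕ):ℝ) + 1) := by
      exact_mod_cast h𝓜card
    have h1 : (x0:ℝ) + 1 ≤ 2 * X := by linarith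
    have h2 : ((x0 ^ k / p : ℕ):ℝ) ≤ X ^ (k:ℝ) / p := by
      calc ((x0 ^ k / p : ℕ):ℝ) ≤ ((x0 ^ k : ℕ):ℝ)/(p:ℝ) := Nat.cast_div_le
      _ ≤ X ^ (k:ℝ)/(p:ℝ) := by
          gcongr
          push_cast
          calc ((x0:ℝ))^k ≤ X ^ k := pow_le_pow_left₀ (by positivity) hx0X k
          _ = X ^ (k:ℝ) := (Real.rpow_natCast X k).symm
    have hu0 : (0:ℝ) ≤ ((x0 ^ k / p : ℕ):ℝ) + 1 := by positivity
    calc (𝓜.card : ℝ) ≤ 2 * ((x0:ℝ) + 1) * (((x0 ^ k / p : ℕ):ℝ) + 1) := hcast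
    _ ≤ 2 * (2 * X) * (((x0 ^ k / p : ℕ):ℝ) + 1) :=
        mul_le_mul_of_nonneg_right (by linarith) hu0
    _ = 4 * X * (((x0 ^ k / p : ℕ):ℝ) + 1) := by ring
    _ ≤ 4 * X * (X ^ (k:ℝ) / p + 1) :=
        mul_le_mul_of_nonneg_left (by linarith) (by positivity)
  -- exponent bookkeeping
  set z₁ : ℝ := X ^ ((k:ℝ) * (1 + 1/(k:ℝ) + ε)) with hz₁def
  set z₂ : ℝ := X ^ ((k:ℝ) * (1/(k:ℝ) + ε)) with hz₂def
  have hz₁ : z₁ = X * X ^ ((k:ℝ)) * X ^ ((k:ℝ)*ε) := by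
    rw [hz₁def]
    have he : (k:ℝ) * (1 + 1/(k:ℝ) + ε) = 1 + (k:ℝ) + (k:ℝ)*ε := by field_simp; ring
    rw [he, Real.rpow_add hXpos, Real.rpow_add hXpos, Real.rpow_one]
  have hz₂ : z₂ = X * X ^ ((k:ℝ)*ε) := by
    rw [hz₂def]
    have he : (k:ℝ) * (1/(k:ℝ) + ε) = 1 + (k:ℝ)*ε := by field_simp
    rw [he, Real.rpow_add hXpos, Real.rpow_one]
  have hpowE : E ^ k = Cδ ^ k * X ^ ((k:ℝ) * δ * (k:ℝ)) := by
    rw [hEdef, mul_pow, ← Real.rpow_natCast (X ^ ((k:ℝ)*δ)) k, ← Real.rpow_mul hXpos.le]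
  have hCδk : Cδ ^ k ≤ Cδ ^ n := pow_le_pow_right₀ hCδ1 (by omega)
  have hXkδ : X ^ ((k:ℝ) * δ * (k:ℝ)) ≤ X ^ ((k:ℝ) * ε) := by
    apply Real.rpow_le_rpow_of_exponent_le hX1
    have hkn' : (k:ℝ) ≤ (n:ℝ) := by exact_mod_cast (show k ≤ n by omega)
    have : δ * (k:ℝ) ≤ ε := by
      rw [hδdef, div_mul_eq_mul_div, div_le_iff₀ hnR]
      nlinarith
    nlinarith
  have step4 : W ^ k ≤ K₁ * (z₁ / p + z₂) := by
    have hfac0 : (0:ℝ) ≤ (n.factorial : ℝ) := Nat.cast_nonneg _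
    have hEk0 : (0:ℝ) ≤ E ^ k := by positivity
    have hbr0 : (0:ℝ) ≤ X ^ (k:ℝ) / p + 1 := by positivity
    calc W ^ k ≤ (n.factorial : ℝ) * (N.choose k) := step1
    _ ≤ (n.factorial : ℝ) * ((𝓜.card : ℝ) * E ^ k) :=
        mul_le_mul_of_nonneg_left step2 hfac0
    _ ≤ (n.factorial : ℝ) * ((4 * X * (X ^ (k:ℝ) / p + 1)) * E ^ k) := by
        apply mul_le_mul_of_nonneg_left _ hfac0
        exact mul_le_mul_of_nonneg_right step3 hEk0
    _ = ((n.factorial : ℝ) * 4 * X) * (X ^ (k:ℝ) / p + 1) * (Cδ ^ k * X ^ ((k:ℝ) * δ * (k:ℝ))) := by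
        rw [hpowE]; ring
    _ ≤ ((n.factorial : ℝ) * 4 * X) * (X ^ (k:ℝ) / p + 1) * (Cδ ^ n * X ^ ((k:ℝ) * ε)) := by
        apply mul_le_mul_of_nonneg_left _ (by positivity)
        apply mul_le_mul hCδk hXkδ (by positivity) (by positivity)
    _ = K₁ * (z₁ / p + z₂) := by
        rw [hz₁, hz₂, hK₁def]; ring
  have step5 : W ≤ K₂ * (X ^ (1 + 1/(k:ℝ) + ε) / (p:ℝ) ^ (1/(k:ℝ)) + X ^ (1/(k:ℝ) + ε)) := by
    have hZ0 : (0:ℝ) ≤ K₁ * (z₁ / p + z₂) := by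
      have : (0:ℝ) ≤ z₁ / p + z₂ := by
        rw [hz₁def, hz₂def]; positivity
      positivity
    have hWZ : W ≤ (K₁ * (z₁ / p + z₂)) ^ (1/(k:ℝ)) := by
      have h := Real.rpow_le_rpow (by positivity) step4 hinvk0
      rw [← Real.rpow_natCast W k] at h
      rw [← Real.rpow_mul hW0, mul_one_div, div_self hkne, Real.rpow_one] at h
      exact h
    have hz₁0 : (0:ℝ) ≤ z₁ / p := by rw [hz₁def]; positivity
    have hz₂0 : (0:ℝ) ≤ z₂ := by rw [hz₂def]; positivity
    have hsplit : (K₁ * (z₁/p + z₂)) ^ (1/(k:ℝ)) ≤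
        K₂ * ((z₁/p) ^ (1/(k:ℝ)) + z₂ ^ (1/(k:ℝ))) := by
      rw [Real.mul_rpow hK₁pos.le (by linarith)]
      have h1 : K₁ ^ (1/(k:ℝ)) ≤ K₂ := by
        rcases le_total K₁ 1 with h | h
        · calc K₁ ^ (1/(k:ℝ)) ≤ 1 := Real.rpow_le_one hK₁pos.le h hinvk0
          _ ≤ K₂ := hK₂1
        · calc K₁ ^ (1/(k:ℝ)) ≤ K₁ ^ (1:ℝ) := Real.rpow_le_rpow_of_exponent_le h hinvk1
          _ = K₁ := Real.rpow_one _
          _ ≤ K₂ := le_max_left _ _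
      have h2 : (z₁/p + z₂) ^ (1/(k:ℝ)) ≤ (z₁/p) ^ (1/(k:ℝ)) + z₂ ^ (1/(k:ℝ)) :=
        real_add_rpow_le hz₁0 hz₂0 hinvk0 hinvk1
      apply mul_le_mul h1 h2 (by positivity) (by linarith)
    have hz₁' : (z₁/p) ^ (1/(k:ℝ)) = X ^ (1 + 1/(k:ℝ) + ε) / (p:ℝ) ^ (1/(k:ℝ)) := by
      rw [Real.div_rpow (by rw [hz₁def]; positivity) hppos.le]
      congr 1
      rw [hz₁def, ← Real.rpow_mul hXpos.le]
      congr 1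
      field_simp
      try ring
    have hz₂' : z₂ ^ (1/(k:ℝ)) = X ^ (1/(k:ℝ) + ε) := by
      rw [hz₂def, ← Real.rpow_mul hXpos.le]
      congr 1
      field_simp
      try ring
    calc W ≤ (K₁ * (z₁ / p + z₂)) ^ (1/(k:ℝ)) := hWZ
    _ ≤ K₂ * ((z₁/p) ^ (1/(k:ℝ)) + z₂ ^ (1/(k:ℝ))) := hsplit
    _ = K₂ * (X ^ (1 + 1/(k:ℝ) + ε) / (p:ℝ) ^ (1/(k:ℝ)) + X ^ (1/(k:ℝ) + ε)) := by
        rw [hz₁', hz₂']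
  -- final assembly
  apply hCR
  have hNW : (N:ℝ) ≤ W + (n:ℝ) := by
    have h6 : N ≤ (N + 1 - k) + (k - 1) := by omega
    have h7 : ((k - 1 : ℕ):ℝ) ≤ (n:ℝ) := by
      exact_mod_cast (show k - 1 ≤ n by omega)
    calc (N:ℝ) ≤ ((N + 1 - k : ℕ):ℝ) + ((k - 1 : ℕ):ℝ) := by exact_mod_cast h6
    _ ≤ W + (n:ℝ) := by rw [hWdef]; linarith
  have hAcard : (A.card:ℝ) ≤ 2*(N:ℝ) + n := by exact_mod_cast hAN
  have hfin : 2 * K₂ * (X ^ (1 + 1/(k:ℝ) + ε) / (p:ℝ) ^ (1/(k:ℝ)) + X ^ (1/(k:ℝ) + ε))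
      = 2 * K₂ * R := by rw [hRdef]; ring
  calc (A.card:ℝ) ≤ 2*(N:ℝ) + n := hAcard
  _ ≤ 2*(W + n) + n := by linarith
  _ ≤ 2 * (K₂ * (X ^ (1 + 1/(k:ℝ) + ε) / (p:ℝ) ^ (1/(k:ℝ)) + X ^ (1/(k:ℝ) + ε)) + n) + n := by
      linarith
  _ ≤ 2 * K₂ * R + 3 * n := by rw [← hfin]; ring_nf; linarith
end

section
/- Let p be a prime, let n ≥ 2 be an integer, and let A₁, …, A_n ⊆ 𝔽_p^* be nonempty subsets. Then | Σ_{a₁ ∈ A₁, …, a_n ∈ A_n} e_p(a₁ ⋯ a_n) | ≤ p^{1/2} (|A₁| ⋯ |A_n|)^{(n-1)/n}. -/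
/-- `e_p(z) = exp(2πi z / p)`, with `z` mod `p` identified with its integer representative. -/
noncomputable def ep (p : ℕ) (z : ZMod p) : ℂ :=
  Complex.exp (2 * Real.pi * Complex.I * (z.val : ℂ) / p)

open Finset

section Aux

lemma ep_eq_stdAddChar (p : ℕ) [NeZero p] (z : ZMod p) : ep p z = ZMod.stdAddChar z := by
  rw [ZMod.stdAddChar_apply, ZMod.toCircle_apply, ep]

lemma conj_std (p : ℕ) [NeZero p] (z : ZMod p) :
    (starRingEnd ℂ) (ZMod.stdAddChar z) = ZMod.stdAddChar (-z) := by
  have h1 : ZMod.stdAddChar z * ZMod.stdAddChar (-z) = 1 := by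
    rw [← AddChar.map_add_eq_mul]; simp
  have h2 : ZMod.stdAddChar z * (starRingEnd ℂ) (ZMod.stdAddChar z) = 1 := by
    rw [mul_comm, Complex.conj_mul']
    norm_cast
    rw [ZMod.stdAddChar_apply]
    simp [Circle.norm_coe]
  rw [← inv_eq_of_mul_eq_one_right h2, ← inv_eq_of_mul_eq_one_right h1]

lemma bilinear (p : ℕ) [NeZero p] (hp : p.Prime) (A B : Finset (ZMod p)) (c : ZMod p) (hc : c ≠ 0) :
    ‖∑ x ∈ A, ∑ y ∈ B, ZMod.stdAddChar (x * y * c)‖ ≤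
      Real.sqrt (p * A.card * B.card) := by
  haveI : Fact p.Prime := ⟨hp⟩
  set ψ : AddChar (ZMod p) ℂ := ZMod.stdAddChar with hψ
  set f : ZMod p → ℂ := fun x => ∑ y ∈ B, ψ (x * y * c) with hf
  have key : ∑ x : ZMod p, Complex.normSq (f x) = p * B.card := by
    have hC : ∑ x : ZMod p, ((Complex.normSq (f x) : ℂ)) = ((p : ℂ) * B.card) := by
      have step1 : ∀ x, ((Complex.normSq (f x) : ℂ))
          = ∑ y ∈ B, ∑ y' ∈ B, ψ (x * ((y - y') * c)) := by
        intro x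
        rw [← Complex.mul_conj, hf]
        simp only
        rw [map_sum, Finset.sum_mul_sum]
        refine Finset.sum_congr rfl fun y _ => Finset.sum_congr rfl fun y' _ => ?_
        rw [conj_std, ← AddChar.map_add_eq_mul]
        ring_nf
      simp only [step1]
      rw [Finset.sum_comm]
      have hsum : ∀ y ∈ B, ∑ x : ZMod p, ∑ y' ∈ B, ψ (x * ((y - y') * c)) = (p : ℂ) := by
        intro y hy
        rw [Finset.sum_comm]
        have inner : ∀ y' : ZMod p, ∑ x : ZMod p, ψ (x * ((y - y') * c))
            = if (y - y') * c = 0 then ((Fintype.card (ZMod p) : ℂ)) else 0 := by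
          intro y'
          rw [AddChar.sum_mulShift _ (ZMod.isPrimitive_stdAddChar p)]
          split <;> simp
        simp only [inner]
        have heq : ∀ y' : ZMod p, ((y - y') * c = 0) ↔ (y' = y) := by
          intro y'
          rw [mul_eq_zero, sub_eq_zero]
          simp [hc, eq_comm]
        simp only [heq]
        rw [Finset.sum_ite_eq' B y (fun _ => ((Fintype.card (ZMod p) : ℂ)))]
        simp [hy, ZMod.card]
      rw [Finset.sum_congr rfl hsum, Finset.sum_const, nsmul_eq_mul]
      ring
    have := hC
    rw [← Complex.ofReal_sum] at this
    · have h2 : ((p : ℂ) * B.card) = (((p : ℝ) * B.card : ℝ) : ℂ) := by push_cast; ring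
      rw [h2] at this
      exact_mod_cast this
  -- now Cauchy-Schwarz
  calc ‖∑ x ∈ A, f x‖ ≤ ∑ x ∈ A, ‖f x‖ :=
        norm_sum_le _ _
    _ ≤ Real.sqrt (p * A.card * B.card) := by
        have h2 : (∑ x ∈ A, ‖f x‖) ^ 2 ≤ A.card * ∑ x ∈ A, ‖f x‖ ^ 2 :=
          sq_sum_le_card_mul_sum_sq
        have h3 : ∑ x ∈ A, ‖f x‖ ^ 2 ≤ ∑ x : ZMod p, ‖f x‖ ^ 2 :=
          Finset.sum_le_univ_sum_of_nonneg fun x => by positivity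
        have h4 : ∑ x : ZMod p, ‖f x‖ ^ 2 = p * B.card := by
          simp only [Complex.sq_norm]; exact key
        have h5 : (∑ x ∈ A, ‖f x‖) ^ 2 ≤ p * A.card * B.card := by
          calc (∑ x ∈ A, ‖f x‖) ^ 2 ≤ A.card * ∑ x ∈ A, ‖f x‖ ^ 2 := h2
            _ ≤ A.card * (p * B.card) := by
                apply mul_le_mul_of_nonneg_left (h3.trans_eq h4) (by positivity)
            _ = p * A.card * B.card := by ring
        have h6 : (0:ℝ) ≤ ∑ x ∈ A, ‖f x‖ :=
          Finset.sum_nonneg fun x _ => norm_nonneg _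
        calc ∑ x ∈ A, ‖f x‖ = Real.sqrt ((∑ x ∈ A, ‖f x‖)^2) :=
              (Real.sqrt_sq h6).symm
          _ ≤ Real.sqrt (p * A.card * B.card) := Real.sqrt_le_sqrt h5

lemma prod_split {M : Type*} [CommMonoid M] {n : ℕ} (i j : Fin n) (hij : i ≠ j)
    (a : Fin n → M) :
    ∏ k, a k = a i * a j * ∏ k, Function.update (Function.update a i 1) j 1 k := by
  have hji : i ∈ (univ : Finset (Fin n)).erase j := by simp [hij]
  rw [Finset.prod_update_of_mem (mem_univ j), Finset.sdiff_singleton_eq_erase,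
    Finset.prod_update_of_mem hji, one_mul, one_mul, Finset.sdiff_singleton_eq_erase,
    mul_comm (a i) (a j), mul_assoc, Finset.mul_prod_erase _ a hji,
    Finset.mul_prod_erase _ a (mem_univ j)]

lemma sum_split {p : ℕ} [NeZero p] {n : ℕ} (A : Fin n → Finset (ZMod p))
    (i j : Fin n) (hij : i ≠ j) :
    ∑ a ∈ Fintype.piFinset A, ZMod.stdAddChar (∏ k, a k)
      = ∑ b ∈ Fintype.piFinset (Function.update (Function.update A i {1}) j {1}),
          ∑ x ∈ A i, ∑ y ∈ A j, ZMod.stdAddChar (x * y * ∏ k, b k) := by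
  set A' := Function.update (Function.update A i {1}) j {1} with hA'
  have hA'i : A' i = {1} := by rw [hA', Function.update_of_ne hij, Function.update_self]
  have hA'j : A' j = {1} := by rw [hA', Function.update_self]
  have hA'k : ∀ k, k ≠ i → k ≠ j → A' k = A k := fun k hki hkj => by
    rw [hA', Function.update_of_ne hkj, Function.update_of_ne hki]
  have hprod : ∑ b ∈ Fintype.piFinset A', ∑ x ∈ A i, ∑ y ∈ A j,
        ZMod.stdAddChar (x * y * ∏ k, b k)
      = ∑ z ∈ Fintype.piFinset A' ×ˢ (A i ×ˢ A j),
          ZMod.stdAddChar (z.2.1 * z.2.2 * ∏ k, z.1 k) := by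
    rw [Finset.sum_product]
    refine Finset.sum_congr rfl fun b _ => ?_
    rw [Finset.sum_product]
  rw [hprod]
  refine Finset.sum_nbij' (fun a => (Function.update (Function.update a i 1) j 1, (a i, a j)))
    (fun z => Function.update (Function.update z.1 i z.2.1) j z.2.2) ?_ ?_ ?_ ?_ ?_
  · intro a ha
    rw [Fintype.mem_piFinset] at ha
    rw [Finset.mem_product, Finset.mem_product, Fintype.mem_piFinset]
    refine ⟨fun k => ?_, ha i, ha j⟩
    show Function.update (Function.update a i 1) j 1 k ∈ A' k
    rcases eq_or_ne k j with rfl | hkj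
    · simp [hA'j]
    · rcases eq_or_ne k i with rfl | hki
      · rw [Function.update_of_ne hkj, Function.update_self, hA'i]; simp
      · rw [Function.update_of_ne hkj, Function.update_of_ne hki, hA'k k hki hkj]
        exact ha k
  · intro z hz
    rw [Finset.mem_product, Finset.mem_product] at hz
    obtain ⟨hz1, hz2, hz3⟩ := hz
    rw [Fintype.mem_piFinset] at hz1 ⊢
    intro k
    rcases eq_or_ne k j with rfl | hkj
    · simpa using hz3
    · rcases eq_or_ne k i with rfl | hki
      · rw [Function.update_of_ne hkj, Function.update_self]; exact hz2
      · rw [Function.update_of_ne hkj, Function.update_of_ne hki, ← hA'k k hki hkj]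
        exact hz1 k
  · intro a _
    dsimp only
    funext k
    rcases eq_or_ne k j with rfl | hkj
    · simp
    · rcases eq_or_ne k i with rfl | hki
      · rw [Function.update_of_ne hkj, Function.update_self]
      · rw [Function.update_of_ne hkj, Function.update_of_ne hki,
          Function.update_of_ne hkj, Function.update_of_ne hki]
  · rintro ⟨b, x, y⟩ hz
    dsimp only
    rw [Finset.mem_product] at hz
    obtain ⟨hz1, -⟩ := hz
    rw [Fintype.mem_piFinset] at hz1
    have hbi : b i = 1 := by have := hz1 i; rwa [hA'i, Finset.mem_singleton] at this
    have hbj : b j = 1 := by have := hz1 j; rwa [hA'j, Finset.mem_singleton] at this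
    have h1 : Function.update (Function.update
        (Function.update (Function.update b i x) j y) i 1) j 1 = b := by
      funext k
      rcases eq_or_ne k j with rfl | hkj
      · rw [Function.update_self, hbj]
      · rcases eq_or_ne k i with rfl | hki
        · rw [Function.update_of_ne hkj, Function.update_self, hbi]
        · rw [Function.update_of_ne hkj, Function.update_of_ne hki,
            Function.update_of_ne hkj, Function.update_of_ne hki]
    have h2 : Function.update (Function.update b i x) j y i = x := by
      rw [Function.update_of_ne hij, Function.update_self]
    have h3 : Function.update (Function.update b i x) j y j = y := Function.update_self _ _ _
    rw [h1, h2, h3]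
  · intro a _
    dsimp only
    rw [← prod_split i j hij a]

lemma card_split {p n : ℕ} (i j : Fin n) (hij : i ≠ j) (A : Fin n → Finset (ZMod p)) :
    ∏ k, (Function.update (Function.update A i {1}) j {1} k).card
      = ∏ k ∈ (univ.erase j).erase i, (A k).card := by
  have hji : i ∈ (univ : Finset (Fin n)).erase j := by simp [hij]
  have e1 : ∀ k, (Function.update (Function.update A i {1}) j {1} k).card
      = Function.update (Function.update (fun k => (A k).card) i 1) j 1 k := by
    intro k
    rcases eq_or_ne k j with rfl | hkj
    · simp
    · rcases eq_or_ne k i with rfl | hki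
      · simp [Function.update_of_ne hkj]
      · simp [Function.update_of_ne hkj, Function.update_of_ne hki]
  rw [Finset.prod_congr rfl fun k _ => e1 k]
  rw [Finset.prod_update_of_mem (mem_univ j), Finset.sdiff_singleton_eq_erase,
    Finset.prod_update_of_mem hji, one_mul, one_mul, Finset.sdiff_singleton_eq_erase]

lemma numeric (n : ℕ) (hn : 2 ≤ n) (t r : ℝ) (ht : 1 ≤ t) (hr : 1 ≤ r)
    (h : r ^ 2 ≤ t ^ (n - 2)) :
    Real.sqrt t * r ≤ (t * r) ^ (((n : ℝ) - 1) / n) := by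
  have ht0 : (0:ℝ) < t := lt_of_lt_of_le one_pos ht
  have hr0 : (0:ℝ) < r := lt_of_lt_of_le one_pos hr
  have htr : (0:ℝ) < t * r := mul_pos ht0 hr0
  have hn0 : (n:ℝ) ≠ 0 := by positivity
  have key : Real.sqrt t ^ n * r ≤ t ^ (n - 1) := by
    have hsq : (Real.sqrt t ^ n * r) ^ 2 ≤ (t ^ (n - 1)) ^ 2 := by
      have e1 : (Real.sqrt t ^ n * r) ^ 2 = t ^ n * r ^ 2 := by
        rw [mul_pow, ← pow_mul, mul_comm n 2, pow_mul, Real.sq_sqrt ht0.le]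
      rw [e1]
      calc t ^ n * r ^ 2 ≤ t ^ n * t ^ (n - 2) :=
            mul_le_mul_of_nonneg_left h (by positivity)
        _ = (t ^ (n - 1)) ^ 2 := by
            rw [← pow_add, ← pow_mul]
            congr 1
            omega
    have h1 : (0:ℝ) ≤ Real.sqrt t ^ n * r := by positivity
    have h2 : (0:ℝ) ≤ t ^ (n - 1) := by positivity
    exact le_of_pow_le_pow_left₀ two_ne_zero h2 hsq
  have main : (Real.sqrt t * r) ^ n ≤ ((t * r) ^ (((n : ℝ) - 1) / n)) ^ n := by
    have eR : ((t * r) ^ (((n : ℝ) - 1) / n)) ^ n = (t * r) ^ (n - 1) := by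
      rw [← Real.rpow_natCast ((t * r) ^ (((n : ℝ) - 1) / n)) n, ← Real.rpow_mul htr.le]
      rw [div_mul_cancel₀ _ hn0]
      rw [show ((n:ℝ) - 1) = ((n - 1 : ℕ) : ℝ) by push_cast [Nat.cast_sub (by omega : 1 ≤ n)]; ring]
      rw [Real.rpow_natCast]
    rw [eR, mul_pow, mul_pow]
    calc Real.sqrt t ^ n * r ^ n = (Real.sqrt t ^ n * r) * r ^ (n - 1) := by
          rw [mul_assoc, ← pow_succ']
          congr 2
          omega
      _ ≤ t ^ (n - 1) * r ^ (n - 1) := mul_le_mul_of_nonneg_right key (by positivity)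
  exact le_of_pow_le_pow_left₀ (by omega) (by positivity) main

lemma split_bound (p : ℕ) [NeZero p] (hp : p.Prime) {n : ℕ} (A : Fin n → Finset (ZMod p))
    (hA0 : ∀ k, (0 : ZMod p) ∉ A k) (i j : Fin n) (hij : i ≠ j) :
    ‖∑ a ∈ Fintype.piFinset A, ZMod.stdAddChar (∏ k, a k)‖ ≤
      Real.sqrt (p * (A i).card * (A j).card) *
        ∏ k ∈ (univ.erase j).erase i, ((A k).card : ℝ) := by
  haveI : Fact p.Prime := ⟨hp⟩
  set A' := Function.update (Function.update A i {1}) j {1} with hA'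
  rw [sum_split A i j hij]
  calc ‖∑ b ∈ Fintype.piFinset A', ∑ x ∈ A i, ∑ y ∈ A j,
          ZMod.stdAddChar (x * y * ∏ k, b k)‖
      ≤ ∑ b ∈ Fintype.piFinset A', ‖∑ x ∈ A i, ∑ y ∈ A j,
          ZMod.stdAddChar (x * y * ∏ k, b k)‖ := norm_sum_le _ _
    _ ≤ ∑ _b ∈ Fintype.piFinset A', Real.sqrt (p * (A i).card * (A j).card) := by
        refine Finset.sum_le_sum fun b hb => ?_
        refine bilinear p hp _ _ _ ?_
        rw [Fintype.mem_piFinset] at hb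
        rw [Finset.prod_ne_zero_iff]
        intro k _
        intro h0
        have hk := hb k
        rw [h0] at hk
        rcases eq_or_ne k j with rfl | hkj
        · rw [hA', Function.update_self, Finset.mem_singleton] at hk
          exact one_ne_zero hk.symm
        · rcases eq_or_ne k i with rfl | hki
          · rw [hA', Function.update_of_ne hij, Function.update_self,
              Finset.mem_singleton] at hk
            exact one_ne_zero hk.symm
          · rw [hA', Function.update_of_ne hkj, Function.update_of_ne hki] at hk
            exact hA0 k hk
    _ = (Fintype.piFinset A').card * Real.sqrt (p * (A i).card * (A j).card) := by
        rw [Finset.sum_const, nsmul_eq_mul]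
    _ = Real.sqrt (p * (A i).card * (A j).card) *
          ∏ k ∈ (univ.erase j).erase i, ((A k).card : ℝ) := by
        rw [Fintype.card_piFinset, card_split i j hij A, mul_comm]
        push_cast
        rfl

end Aux

/-- For a prime `p` and nonempty subsets `A₁, …, A_n ⊆ 𝔽_p^*` (`n ≥ 2`),
`|Σ_{a₁ ∈ A₁, …, a_n ∈ A_n} e_p(a₁ ⋯ a_n)| ≤ p^{1/2} (|A₁| ⋯ |A_n|)^{(n-1)/n}`. -/
theorem stmt7 (p : ℕ) (hp : p.Prime) (n : ℕ) (hn : 2 ≤ n) (A : Fin n → Finset (ZMod p))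
    (hA0 : ∀ i, (0 : ZMod p) ∉ A i) (hAne : ∀ i, (A i).Nonempty) :
    ‖∑ a ∈ Fintype.piFinset A, ep p (∏ i, a i)‖ ≤
      Real.sqrt p * (∏ i, ((A i).card : ℝ)) ^ (((n : ℝ) - 1) / n) := by
  haveI : NeZero p := ⟨hp.ne_zero⟩
  haveI : Nonempty (Fin n) := ⟨⟨0, by omega⟩⟩
  -- replace ep by stdAddChar
  rw [show (∑ a ∈ Fintype.piFinset A, ep p (∏ i, a i))
      = ∑ a ∈ Fintype.piFinset A, ZMod.stdAddChar (∏ i, a i) from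
    Finset.sum_congr rfl fun a _ => ep_eq_stdAddChar p _]
  -- choose the two largest sets
  obtain ⟨i, -, hi⟩ := Finset.exists_max_image (univ : Finset (Fin n))
    (fun k => (A k).card) Finset.univ_nonempty
  have herase : ((univ : Finset (Fin n)).erase i).Nonempty := by
    rw [← Finset.card_pos, Finset.card_erase_of_mem (mem_univ i), Finset.card_univ,
      Fintype.card_fin]
    omega
  obtain ⟨j, hjmem, hj⟩ := Finset.exists_max_image _ (fun k => (A k).card) herase
  have hij : i ≠ j := fun h => (Finset.mem_erase.1 hjmem).1 h.symm
  have hiuniv : i ∈ (univ : Finset (Fin n)).erase j := by simp [hij]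
  set ai := ((A i).card : ℝ) with hai
  set aj := ((A j).card : ℝ) with haj
  set r := ∏ k ∈ ((univ : Finset (Fin n)).erase j).erase i, ((A k).card : ℝ) with hrdef
  have h1ai : 1 ≤ ai := by rw [hai]; exact_mod_cast (hAne i).card_pos
  have h1aj : 1 ≤ aj := by rw [haj]; exact_mod_cast (hAne j).card_pos
  have h1r : 1 ≤ r := by
    rw [hrdef]
    have := Finset.prod_le_prod (s := ((univ : Finset (Fin n)).erase j).erase i)
      (f := fun _ => (1:ℝ)) (g := fun k => ((A k).card : ℝ))
      (fun _ _ => zero_le_one) (fun k _ => by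
        show (1:ℝ) ≤ ((A k).card : ℝ)
        exact_mod_cast (hAne k).card_pos)
    simpa using this
  have hPall : ∏ k, ((A k).card : ℝ) = aj * (ai * r) := by
    rw [hrdef, Finset.mul_prod_erase _ (fun k => ((A k).card : ℝ)) hiuniv,
      Finset.mul_prod_erase _ (fun k => ((A k).card : ℝ)) (mem_univ j)]
  have hcard_rest : (((univ : Finset (Fin n)).erase j).erase i).card = n - 2 := by
    rw [Finset.card_erase_of_mem hiuniv, Finset.card_erase_of_mem (mem_univ j),
      Finset.card_univ, Fintype.card_fin]
    omega
  have hr2 : r ^ 2 ≤ (ai * aj) ^ (n - 2) := by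
    rw [hrdef, ← Finset.prod_pow]
    calc ∏ k ∈ ((univ : Finset (Fin n)).erase j).erase i, ((A k).card : ℝ) ^ 2
        ≤ ∏ _k ∈ ((univ : Finset (Fin n)).erase j).erase i, (ai * aj) :=
          Finset.prod_le_prod (fun k _ => by positivity) (fun k hk => ?_)
      _ = (ai * aj) ^ (n - 2) := by rw [Finset.prod_const, hcard_rest]
    · have hki : k ≠ i := (Finset.mem_erase.1 hk).1
      have hkj : k ∈ (univ : Finset (Fin n)).erase i := by
        simp [hki]
      have hk1 : ((A k).card : ℝ) ≤ ai := by rw [hai]; exact_mod_cast hi k (mem_univ k)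
      have hk2 : ((A k).card : ℝ) ≤ aj := by rw [haj]; exact_mod_cast hj k hkj
      have h0 : (0:ℝ) ≤ ((A k).card : ℝ) := by positivity
      nlinarith
  calc ‖∑ a ∈ Fintype.piFinset A, ZMod.stdAddChar (∏ i, a i)‖
      ≤ Real.sqrt (p * (A i).card * (A j).card) * r :=
        split_bound p hp A hA0 i j hij
    _ = Real.sqrt p * (Real.sqrt (ai * aj) * r) := by
        rw [mul_assoc ((p:ℝ)) ai aj, Real.sqrt_mul (by positivity), mul_assoc]
    _ ≤ Real.sqrt p * ((ai * aj * r) ^ (((n : ℝ) - 1) / n)) := by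
        refine mul_le_mul_of_nonneg_left ?_ (Real.sqrt_nonneg _)
        exact numeric n hn (ai * aj) r (by nlinarith) h1r hr2
    _ = Real.sqrt p * (∏ k, ((A k).card : ℝ)) ^ (((n : ℝ) - 1) / n) := by
        rw [hPall]
        ring_nf
end

section
/- Let p be a prime, let X be real with 1 ≤ X ≤ p/12, and let A ⊆ 𝔽_p^* belong to 𝒮(X). Then | Σ_{s₁, s₂ ∈ A} e_p(s₁/s₂) | + | Σ_{s₁, s₂ ∈ A} e_p(2 s₁/s₂) | ≥ |A|²/400. -/
open Real Finset

lemma ep_re (p : ℕ) (z : ZMod p) : (ep p z).re = Real.cos (2 * π * z.val / p) := by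
  have h : ep p z = Complex.exp ((2 * π * z.val / p : ℝ) * Complex.I) := by
    unfold ep; congr 1; push_cast; ring
  rw [h, Complex.exp_ofReal_mul_I_re]

lemma cos_congr (p : ℕ) (hp : 0 < p) {a b : ℤ} (h : (a : ZMod p) = (b : ZMod p)) :
    Real.cos (2 * π * a / p) = Real.cos (2 * π * b / p) := by
  have hmod : a ≡ b [ZMOD (p : ℤ)] := (ZMod.intCast_eq_intCast_iff _ _ _).mp h
  obtain ⟨k, hk⟩ := hmod.dvd
  have hb : (b : ℝ) = (a : ℝ) + (k : ℝ) * p := by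
    have h2 : (b : ℤ) = a + p * k := by linarith [hk]
    rw [h2]; push_cast; ring
  have hpR : (p : ℝ) ≠ 0 := by positivity
  rw [hb, show 2 * π * ((a : ℝ) + (k : ℝ) * p) / p = 2 * π * a / p + (k : ℤ) * (2 * π) by
    push_cast; field_simp, Real.cos_add_int_mul_two_pi]

/-- `g z = cos θ + cos 2θ` with `θ = 2π z.val / p`. -/
noncomputable def gfun (p : ℕ) (z : ZMod p) : ℝ :=
  Real.cos (2 * π * z.val / p) + Real.cos (2 * (2 * π * z.val / p))

lemma gfun_lower (p : ℕ) (z : ZMod p) : -(9/8) ≤ gfun p z := by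
  unfold gfun
  set θ := 2 * π * (z.val : ℝ) / p
  have h := Real.cos_sq θ
  nlinarith [sq_nonneg (Real.cos θ + 1/4), Real.neg_one_le_cos θ, Real.cos_le_one θ]

lemma gfun_small (p : ℕ) (hp : 0 < p) (X : ℝ) (hX2 : X ≤ (p : ℝ) / 12) (z : ZMod p)
    (hz : (valMin p z : ℝ) ≤ X) : 2 - 5 * π ^ 2 / 72 ≤ gfun p z := by
  haveI : NeZero p := ⟨hp.ne'⟩
  have hpR : (0 : ℝ) < p := by exact_mod_cast hp
  have hvlt : z.val < p := ZMod.val_lt z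
  set t : ℤ := if z.val ≤ p - z.val then (z.val : ℤ) else (z.val : ℤ) - p with ht
  have htcast : ((z.val : ℤ) : ZMod p) = (t : ZMod p) := by
    rw [ht]; split
    · rfl
    · push_cast; simp
  have hnat : t.natAbs = valMin p z := by
    unfold valMin; rw [ht]; split <;> omega
  have habs : |(t : ℝ)| ≤ X := by
    rw [← Int.cast_abs, Int.abs_eq_natAbs, hnat]; exact_mod_cast hz
  have hX0 : 0 ≤ X := le_trans (abs_nonneg _) habs
  -- rewrite the two cosines in terms of t
  have hc1 : Real.cos (2 * π * z.val / p) = Real.cos (2 * π * (t : ℝ) / p) := by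
    have := cos_congr p hp htcast
    push_cast at this ⊢; exact this
  have hc2 : Real.cos (2 * (2 * π * z.val / p)) = Real.cos (2 * π * ((2 * t : ℤ) : ℝ) / p) := by
    have h2 : (((2 * z.val : ℤ)) : ZMod p) = ((2 * t : ℤ) : ZMod p) := by
      push_cast [← htcast]; ring
    have := cos_congr p hp h2
    push_cast at this ⊢
    rw [show 2 * (2 * π * (z.val : ℝ) / p) = 2 * π * (2 * (z.val : ℝ)) / p by ring, this]
  unfold gfun
  rw [hc1, hc2]
  -- bound the angles
  have hang1 : |2 * π * (t : ℝ) / p| ≤ π / 6 := by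
    rw [abs_div, abs_of_pos hpR, abs_mul, abs_mul, abs_of_pos pi_pos, abs_of_nonneg (by norm_num : (0:ℝ) ≤ 2)]
    rw [div_le_iff₀ hpR]
    nlinarith [pi_pos, mul_le_mul_of_nonneg_left (le_trans habs hX2) (by positivity : (0:ℝ) ≤ 2 * π)]
  have hang2 : |2 * π * ((2 * t : ℤ) : ℝ) / p| ≤ π / 3 := by
    push_cast
    rw [show 2 * π * (2 * (t : ℝ)) / p = 2 * (2 * π * (t : ℝ) / p) by ring, abs_mul,
      abs_of_nonneg (by norm_num : (0:ℝ) ≤ 2)]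
    linarith [hang1]
  have hb1 : 1 - π ^ 2 / 72 ≤ Real.cos (2 * π * (t : ℝ) / p) := by
    have h2 : (2 * π * (t : ℝ) / p) ^ 2 ≤ (π / 6) ^ 2 := by
      rw [← sq_abs]; exact pow_le_pow_left₀ (abs_nonneg _) hang1 2
    nlinarith [Real.one_sub_sq_div_two_le_cos (x := 2 * π * (t : ℝ) / p)]
  have hb2 : 1 - π ^ 2 / 18 ≤ Real.cos (2 * π * ((2 * t : ℤ) : ℝ) / p) := by
    have h2 : (2 * π * ((2 * t : ℤ) : ℝ) / p) ^ 2 ≤ (π / 3) ^ 2 := by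
      rw [← sq_abs]; exact pow_le_pow_left₀ (abs_nonneg _) hang2 2
    nlinarith [Real.one_sub_sq_div_two_le_cos (x := 2 * π * ((2 * t : ℤ) : ℝ) / p)]
  linarith

lemma cos_double_val (p : ℕ) (hp : 0 < p) (z : ZMod p) :
    Real.cos (2 * π * ((2 * z : ZMod p).val) / p) = Real.cos (2 * (2 * π * z.val / p)) := by
  haveI : NeZero p := ⟨hp.ne'⟩
  have h : ((((2 * z : ZMod p).val : ℕ) : ℤ) : ZMod p) = (((2 * z.val : ℕ) : ℤ) : ZMod p) := by
    push_cast [ZMod.natCast_val, ZMod.cast_id]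
    ring
  have := cos_congr p hp h
  push_cast at this ⊢
  rw [this]; ring_nf

/-- For a prime `p`, `1 ≤ X ≤ p/12` and `A ∈ 𝒮(X)`,
`|Σ_{s₁,s₂ ∈ A} e_p(s₁/s₂)| + |Σ_{s₁,s₂ ∈ A} e_p(2s₁/s₂)| ≥ |A|²/400`. -/
theorem stmt11 (p : ℕ) (hp : p.Prime) (X : ℝ) (hX1 : 1 ≤ X) (hX2 : X ≤ (p : ℝ) / 12)
    (A : Finset (ZMod p)) (hA : SMem p X A) :
    (A.card : ℝ) ^ 2 / 400 ≤
      ‖∑ s₁ ∈ A, ∑ s₂ ∈ A, ep p (s₁ * s₂⁻¹)‖ +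
      ‖∑ s₁ ∈ A, ∑ s₂ ∈ A, ep p (2 * (s₁ * s₂⁻¹))‖ := by
  have hp0 : 0 < p := hp.pos
  set T1 := ∑ s₁ ∈ A, ∑ s₂ ∈ A, ep p (s₁ * s₂⁻¹) with hT1
  set T2 := ∑ s₁ ∈ A, ∑ s₂ ∈ A, ep p (2 * (s₁ * s₂⁻¹)) with hT2
  set S := ∑ s₁ ∈ A, ∑ s₂ ∈ A, gfun p (s₁ * s₂⁻¹) with hS
  have hre : T1.re + T2.re = S := by
    rw [hT1, hT2, hS, Complex.re_sum, Complex.re_sum, ← Finset.sum_add_distrib]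
    refine Finset.sum_congr rfl fun s₁ _ => ?_
    rw [Complex.re_sum, Complex.re_sum, ← Finset.sum_add_distrib]
    refine Finset.sum_congr rfl fun s₂ _ => ?_
    rw [ep_re, ep_re, gfun, cos_double_val p hp0]
  set c : ℝ := 7 / 8 - 5 * π ^ 2 / 72 with hc
  have hpair : ∀ s₁ ∈ A, ∀ s₂ ∈ A, c ≤ gfun p (s₁ * s₂⁻¹) + gfun p (s₂ * s₁⁻¹) := by
    intro s₁ h₁ s₂ h₂
    rcases hA.2 s₁ h₁ s₂ h₂ with h | h
    · have := gfun_small p hp0 X hX2 _ h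
      have := gfun_lower p (s₂ * s₁⁻¹)
      rw [hc]; linarith
    · have := gfun_small p hp0 X hX2 _ h
      have := gfun_lower p (s₁ * s₂⁻¹)
      rw [hc]; linarith
  have h2S : (A.card : ℝ) ^ 2 * c ≤ 2 * S := by
    have hsymm : S = ∑ s₁ ∈ A, ∑ s₂ ∈ A, gfun p (s₂ * s₁⁻¹) := Finset.sum_comm
    have : (2 : ℝ) * S = ∑ s₁ ∈ A, ∑ s₂ ∈ A, (gfun p (s₁ * s₂⁻¹) + gfun p (s₂ * s₁⁻¹)) := by
      simp_rw [Finset.sum_add_distrib]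
      rw [two_mul]; rw [← hS, ← hsymm]
    rw [this]
    calc (A.card : ℝ) ^ 2 * c = ∑ _s₁ ∈ A, ∑ _s₂ ∈ A, c := by
          rw [Finset.sum_const, Finset.sum_const]; simp; ring
      _ ≤ _ := by
          refine Finset.sum_le_sum fun s₁ h₁ => Finset.sum_le_sum fun s₂ h₂ => hpair s₁ h₁ s₂ h₂
  have hcge : 1 / 200 ≤ c := by
    rw [hc]
    nlinarith [Real.pi_lt_d2, Real.pi_pos]
  have hfinal : (A.card : ℝ) ^ 2 / 400 ≤ S := by
    have hA2 : (0 : ℝ) ≤ (A.card : ℝ) ^ 2 := by positivity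
    clear_value S c
    nlinarith [mul_le_mul_of_nonneg_left hcge hA2, h2S]
  calc (A.card : ℝ) ^ 2 / 400 ≤ S := hfinal
    _ = T1.re + T2.re := hre.symm
    _ ≤ ‖T1‖ + ‖T2‖ := add_le_add (Complex.re_le_norm T1) (Complex.re_le_norm T2)
end
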